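/- arXiv:1412.0882 — 7 statements merged into one kernel-verified Lean document; each statement's English description precedes it below -/
import Mathlib

section
/- For every real x ≥ 0 one has (1−p)·π([x, αx)) = p·π([x−β, x)). (Lemma 'hf': π([x,αx]) = (p/(1−p))·π([x−β,x]).) -/
/-!
Apply the invariance equation to `A = (-∞, x)`: the two preimages are `(-∞, x - β)` and
`(-∞, α x)`. Splitting `π(-∞, x)` as `p·π(-∞, x) + (1-p)·π(-∞, x)` and the three half-lines
at `x - β ≤ x ≤ α x`, the common finite masses cancel and only the two intervals remain.
-/

open MeasureTheory Set
open scoped ENNReal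

theorem measure_Iio_eq_add_measure_Ico (μ : Measure ℝ) {a b : ℝ} (hab : a ≤ b) :
    μ (Iio b) = μ (Iio a) + μ (Ico a b) := by
  rw [← Iio_union_Ico_eq_Iio hab,
    measure_union ((Iio_disjoint_Ici le_rfl).mono_right Ico_subset_Ici_self) measurableSet_Ico]

theorem measure_Ico_balance (μ : Measure ℝ) [IsFiniteMeasure μ] {P Q : ℝ≥0∞} (hPQ : P + Q = 1)
    {a b c : ℝ} (hab : a ≤ b) (hbc : b ≤ c)
    (h : μ (Iio b) = P * μ (Iio a) + Q * μ (Iio c)) :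
    Q * μ (Ico b c) = P * μ (Ico a b) := by
  have hP : P ≠ ∞ := ne_top_of_le_ne_top ENNReal.one_ne_top (hPQ ▸ le_self_add)
  have hQ : Q ≠ ∞ := ne_top_of_le_ne_top ENNReal.one_ne_top (hPQ ▸ le_add_self)
  have hfin : P * μ (Iio a) + Q * μ (Iio b) ≠ ∞ := ENNReal.add_ne_top.2
    ⟨ENNReal.mul_ne_top hP (measure_ne_top μ _), ENNReal.mul_ne_top hQ (measure_ne_top μ _)⟩
  refine (ENNReal.add_right_inj hfin).1 ?_
  calc P * μ (Iio a) + Q * μ (Iio b) + Q * μ (Ico b c)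
      = P * μ (Iio a) + Q * μ (Iio c) := by
        rw [measure_Iio_eq_add_measure_Ico μ hbc, mul_add, add_assoc]
    _ = (P + Q) * μ (Iio b) := by rw [hPQ, one_mul, h]
    _ = P * μ (Iio a) + Q * μ (Iio b) + P * μ (Ico a b) := by
        rw [add_mul, measure_Iio_eq_add_measure_Ico μ hab, mul_add]
        ring

theorem stmt0_general (p α β : ℝ) (hp0 : 0 < p) (hp1 : p < 1) (hα : 1 < α) (hβ : 0 < β)
    (π : Measure ℝ) [IsProbabilityMeasure π]
    (hinv : ∀ A : Set ℝ, MeasurableSet A →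
      π A = ENNReal.ofReal p * π ((fun y => y + β) ⁻¹' A)
          + ENNReal.ofReal (1 - p) * π ((fun y => y / α) ⁻¹' A)) :
    ∀ x : ℝ, 0 ≤ x →
      ENNReal.ofReal (1 - p) * π (Ico x (α * x)) =
        ENNReal.ofReal p * π (Ico (x - β) x) := by
  intro x hx
  have hα0 : 0 < α := one_pos.trans hα
  have hPQ : ENNReal.ofReal p + ENNReal.ofReal (1 - p) = 1 := by
    rw [← ENNReal.ofReal_add hp0.le (sub_nonneg.2 hp1.le), add_sub_cancel, ENNReal.ofReal_one]
  have hdiv : (fun y : ℝ => y / α) ⁻¹' Iio x = Iio (α * x) := by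
    ext y; simp [div_lt_iff₀ hα0, mul_comm]
  have hmix := hinv (Iio x) measurableSet_Iio
  rw [preimage_add_const_Iio, hdiv] at hmix
  exact measure_Ico_balance π hPQ (sub_le_self x hβ.le) (le_mul_of_one_le_left hx hα.le) hmix

/-- Lemma `hf`: for every `x ≥ 0`, `(1-p)·π([x, αx)) = p·π([x-β, x))`. -/
theorem stmt0 (p α β : ℝ) (hp0 : 0 < p) (hp1 : p < 1) (hα : 1 < α) (hβ : 0 < β)
    (π : Measure ℝ) [IsProbabilityMeasure π] (hsupp : π (Ici (0 : ℝ)) = 1)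
    (hinv : ∀ A : Set ℝ, MeasurableSet A →
      π A = ENNReal.ofReal p * π ((fun y => y + β) ⁻¹' A)
          + ENNReal.ofReal (1 - p) * π ((fun y => y / α) ⁻¹' A)) :
    ∀ x : ℝ, 0 ≤ x →
      ENNReal.ofReal (1 - p) * π (Ico x (α * x)) =
        ENNReal.ofReal p * π (Ico (x - β) x) :=
  stmt0_general p α β hp0 hp1 hα hβ π hinv
end

section
/- For every integer n ≥ 1 one has (1−p)·π([nβ, (n+1)β)) ≤ p·π([(n−1)β, nβ)); in particular, when p ≤ 1/2 the sequence n ↦ π([nβ,(n+1)β)) is non-increasing. -/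
/-!
Write `F x = π [0, x)`. Since `π` has no mass on `(-∞, 0)`, invariance applied to `[0, x)` gives
`F x = p F (x - β) + (1 - p) F (α x)`, and `F (α x) ≥ F (x + β)` as soon as `x + β ≤ α x`.
With `a = π [x - β, x)` and `b = π [x, x + β)` this reads
`F (x - β) + a ≥ p F (x - β) + (1 - p) (F (x - β) + a + b)`, i.e. `(1 - p) b ≤ p a`.
-/

open MeasureTheory Set

open scoped ENNReal

lemma ENNReal.mul_le_mul_of_convex_comb_le {P Q F a b : ℝ≥0∞} (hPQ : P + Q = 1)
    (hF : F ≠ ∞) (ha : a ≠ ∞) (h : P * F + Q * (F + a + b) ≤ F + a) : Q * b ≤ P * a := by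
  have hQa : Q * a ≠ ∞ := ENNReal.mul_ne_top (ne_top_of_le_ne_top ENNReal.one_ne_top
    (hPQ ▸ le_add_self)) ha
  have hF_split : P * F + Q * (F + a + b) = F + (Q * a + Q * b) := by
    rw [mul_add, mul_add, ← add_assoc, ← add_assoc, ← add_mul, hPQ, one_mul, add_assoc]
  have ha_split : a = Q * a + P * a := by rw [← add_mul, add_comm Q, hPQ, one_mul]
  rw [hF_split, ENNReal.add_le_add_iff_left hF] at h
  exact (ENNReal.add_le_add_iff_left hQa).1 (ha_split ▸ h)

lemma ENNReal.antitone_of_mul_succ_le_mul {u : ℕ → ℝ≥0∞} {P Q : ℝ≥0∞} (hPQ : P ≤ Q)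
    (hQ₀ : Q ≠ 0) (hQ : Q ≠ ∞) (h : ∀ n, Q * u (n + 1) ≤ P * u n) : Antitone u :=
  antitone_nat_of_succ_le fun n =>
    (ENNReal.mul_le_mul_iff_right hQ₀ hQ).1 ((h n).trans (by gcongr))

lemma MeasureTheory.measure_Ico_add_measure_Ico {μ : Measure ℝ} {a b c : ℝ} (hab : a ≤ b)
    (hbc : b ≤ c) : μ (Ico a b) + μ (Ico b c) = μ (Ico a c) := by
  rw [← measure_union Ico_disjoint_Ico_same measurableSet_Ico, Ico_union_Ico_eq_Ico hab hbc]

section StationaryDistribution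

variable {π : Measure ℝ} {p α β : ℝ}

lemma measure_Ico_zero_eq_of_invariant (hneg : π (Iio 0) = 0) (hα : 0 < α) (hβ : 0 ≤ β)
    (hinv : ∀ A : Set ℝ, MeasurableSet A →
      π A = ENNReal.ofReal p * π ((fun y => y + β) ⁻¹' A)
          + ENNReal.ofReal (1 - p) * π ((fun y => y / α) ⁻¹' A)) (c : ℝ) :
    π (Ico 0 c) = ENNReal.ofReal p * π (Ico 0 (c - β))
      + ENNReal.ofReal (1 - p) * π (Ico 0 (α * c)) := by
  have hshift : π (Ico (-β) (c - β)) = π (Ico 0 (c - β)) := by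
    rw [← measure_inter_conull (t := Ici 0) (by rwa [compl_Ici]), Ico_inter_Ici,
      max_eq_right (by linarith)]
  rw [hinv _ measurableSet_Ico, preimage_add_const_Ico, zero_sub, hshift]
  simp [div_eq_mul_inv, hα, mul_comm c]

lemma mul_measure_Ico_le_of_invariant [IsFiniteMeasure π] (hp₀ : 0 ≤ p) (hp₁ : p ≤ 1)
    (hneg : π (Iio 0) = 0) (hα : 0 < α) (hβ : 0 ≤ β)
    (hinv : ∀ A : Set ℝ, MeasurableSet A →
      π A = ENNReal.ofReal p * π ((fun y => y + β) ⁻¹' A)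
          + ENNReal.ofReal (1 - p) * π ((fun y => y / α) ⁻¹' A))
    {x : ℝ} (hx : β ≤ x) (hxα : x + β ≤ α * x) :
    ENNReal.ofReal (1 - p) * π (Ico x (x + β)) ≤ ENNReal.ofReal p * π (Ico (x - β) x) := by
  have hPQ : ENNReal.ofReal p + ENNReal.ofReal (1 - p) = 1 := by
    rw [← ENNReal.ofReal_add hp₀ (by linarith), add_sub_cancel, ENNReal.ofReal_one]
  refine ENNReal.mul_le_mul_of_convex_comb_le hPQ
    (measure_ne_top π (Ico 0 (x - β))) (measure_ne_top π _) ?_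
  rw [measure_Ico_add_measure_Ico (by linarith) (by linarith),
    measure_Ico_add_measure_Ico (by linarith) (by linarith),
    measure_Ico_zero_eq_of_invariant hneg hα hβ hinv x]
  gcongr

end StationaryDistribution

/-- For every integer `n ≥ 1`, `(1-p)·π([nβ,(n+1)β)) ≤ p·π([(n-1)β, nβ))`; in
particular, when `p ≤ 1/2` the sequence `n ↦ π([nβ,(n+1)β))` is non-increasing. -/
theorem stmt1 (p α β : ℝ) (hp0 : 0 < p) (hp1 : p < 1) (hα : 2 ≤ α) (hβ : 0 < β)
    (π : Measure ℝ) [IsProbabilityMeasure π] (hsupp : π (Ici (0 : ℝ)) = 1)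
    (hinv : ∀ A : Set ℝ, MeasurableSet A →
      π A = ENNReal.ofReal p * π ((fun y => y + β) ⁻¹' A)
          + ENNReal.ofReal (1 - p) * π ((fun y => y / α) ⁻¹' A)) :
    (∀ n : ℕ, 1 ≤ n →
      ENNReal.ofReal (1 - p) * π (Ico ((n : ℝ) * β) (((n : ℝ) + 1) * β)) ≤
        ENNReal.ofReal p * π (Ico (((n : ℝ) - 1) * β) ((n : ℝ) * β))) ∧
    (p ≤ 1 / 2 → Antitone fun n : ℕ => π (Ico ((n : ℝ) * β) (((n : ℝ) + 1) * β))) := by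
  have hneg : π (Iio 0) = 0 := by
    rwa [← compl_Ici, prob_compl_eq_zero_iff measurableSet_Ici]
  have key : ∀ n : ℕ, 1 ≤ n →
      ENNReal.ofReal (1 - p) * π (Ico ((n : ℝ) * β) (((n : ℝ) + 1) * β)) ≤
        ENNReal.ofReal p * π (Ico (((n : ℝ) - 1) * β) ((n : ℝ) * β)) := by
    intro n hn
    have hn' : (1 : ℝ) ≤ n := by exact_mod_cast hn
    rw [add_one_mul, sub_one_mul]
    refine mul_measure_Ico_le_of_invariant hp0.le hp1.le hneg (by linarith) hβ.le hinv
      (by nlinarith) ?_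
    nlinarith [mul_le_mul_of_nonneg_right hα (by positivity : (0 : ℝ) ≤ n * β)]
  refine ⟨key, fun hp => ENNReal.antitone_of_mul_succ_le_mul (P := ENNReal.ofReal p)
    (Q := ENNReal.ofReal (1 - p)) (ENNReal.ofReal_le_ofReal (by linarith))
    (by simpa using hp1) ENNReal.ofReal_ne_top fun n => ?_⟩
  simpa using key (n + 1) (by omega)
end

section
/- For every integer n ≥ 1 one has π([nβ, (n+1)β)) ≤ p·π([(n−1)β, nβ))·(1 + p/((1−p)·n·(α−1))). -/
/-!
Write `t k = π [kβ, ∞)` and `I k = [kβ, (k + 1)β)`. Stationarity applied to the tail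
`[(k + 1)β, ∞)` gives `t (k + 1) = p t k + (1 - p) t (α (k + 1))`, that is
`(1 - p) (t (k + 1) - t (α (k + 1))) = p π (I k)`. Subtracting two consecutive instances,
`π (I n) = p π (I (n - 1)) + (1 - p) S` with `S = t (α n) - t (α (n + 1))`. Since `t` is
antitone, each of the `n (α - 1)` terms `(1 - p) (t (j + 1) - t (α (j + 1)))`, `n ≤ j < α n`,
is at least `(1 - p) S`, while their sum `p (t n - t (α n))` telescopes to
`p² π (I (n - 1)) / (1 - p)`.
-/

open MeasureTheory Set

section TailRecursion

variable {t : ℕ → ℝ} {α : ℕ} {p : ℝ}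

theorem one_sub_mul_sub_eq_of_tail_recursion
    (hrec : ∀ k, t (k + 1) = p * t k + (1 - p) * t (α * (k + 1))) (k : ℕ) :
    (1 - p) * (t (k + 1) - t (α * (k + 1))) = p * (t k - t (k + 1)) := by
  linear_combination hrec k

theorem mul_sub_le_of_tail_recursion (ht : Antitone t) (hp : p ≤ 1) (hα : 1 ≤ α)
    (hrec : ∀ k, t (k + 1) = p * t k + (1 - p) * t (α * (k + 1))) (n : ℕ) :
    (n * ((α : ℝ) - 1)) * ((1 - p) * (t (α * n) - t (α * (n + 1)))) ≤
      p * (t n - t (α * n)) := by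
  have hn : n ≤ α * n := Nat.le_mul_of_pos_left n hα
  have hterm : ∀ j ∈ Finset.Ico n (α * n),
      (1 - p) * (t (α * n) - t (α * (n + 1))) ≤ p * (t j - t (j + 1)) := by
    intro j hj
    rw [Finset.mem_Ico] at hj
    rw [← one_sub_mul_sub_eq_of_tail_recursion hrec j]
    have h₁ : t (α * n) ≤ t (j + 1) := ht (by omega)
    have h₂ : t (α * (j + 1)) ≤ t (α * (n + 1)) := ht (Nat.mul_le_mul_left α (by omega))
    gcongr
  have htele : ∑ j ∈ Finset.Ico n (α * n), (t j - t (j + 1)) = t n - t (α * n) := by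
    have := Finset.sum_Ico_sub (fun j => -t j) hn
    simp only [sub_neg_eq_add, neg_add_eq_sub] at this
    linarith
  have hcard : ((α * n - n : ℕ) : ℝ) = n * ((α : ℝ) - 1) := by
    rw [Nat.cast_sub hn]
    push_cast
    ring
  have := Finset.sum_le_sum hterm
  rwa [Finset.sum_const, Nat.card_Ico, nsmul_eq_mul, hcard, ← Finset.mul_sum, htele] at this

theorem sub_succ_le_of_tail_recursion (ht : Antitone t) (hp : p < 1) (hα : 1 < α)
    (hrec : ∀ k, t (k + 1) = p * t k + (1 - p) * t (α * (k + 1))) (n : ℕ) :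
    t (n + 1) - t (n + 2) ≤
      p * (1 + p / ((1 - p) * (n + 1) * ((α : ℝ) - 1))) * (t n - t (n + 1)) := by
  set M : ℝ := (n + 1) * ((α : ℝ) - 1)
  set S := t (α * (n + 1)) - t (α * (n + 2))
  have h1p : 0 < 1 - p := by linarith
  have hM : 0 < M := by
    have : (1 : ℝ) < α := by exact_mod_cast hα
    positivity
  have hblock : M * ((1 - p) * S) ≤ p * (t (n + 1) - t (α * (n + 1))) := by
    simpa [M] using mul_sub_le_of_tail_recursion ht hp.le hα.le hrec (n + 1)
  have hS : (1 - p) * S ≤ p * (p * (t n - t (n + 1))) / ((1 - p) * M) := by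
    rw [le_div_iff₀ (by positivity), ← one_sub_mul_sub_eq_of_tail_recursion hrec n]
    linarith [mul_le_mul_of_nonneg_left hblock h1p.le]
  have hsplit : t (n + 1) - t (n + 2) = p * (t n - t (n + 1)) + (1 - p) * S := by
    linear_combination hrec n - hrec (n + 1)
  calc t (n + 1) - t (n + 2)
        ≤ p * (t n - t (n + 1)) + p * (p * (t n - t (n + 1))) / ((1 - p) * M) := by linarith
    _ = _ := by
      simp only [M]
      field_simp

end TailRecursion

section StationaryTails

variable {π : Measure ℝ} [IsFiniteMeasure π]

theorem antitone_measureReal_Ici_nat_mul {β : ℝ} (hβ : 0 ≤ β) :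
    Antitone fun k : ℕ => π.real (Ici (k * β)) :=
  fun _ _ hjk => measureReal_mono (Ici_subset_Ici.2 (by gcongr))

theorem measure_Ico_eq_ofReal_sub {a b : ℝ} (hab : a ≤ b) :
    π (Ico a b) = ENNReal.ofReal (π.real (Ici a) - π.real (Ici b)) := by
  rw [← Ici_sdiff_Ici, ← measureReal_sdiff (Ici_subset_Ici.2 hab) measurableSet_Ici,
    ofReal_measureReal]

theorem measureReal_Ici_add_eq {a b p : ℝ} (ha : 0 < a) (hp0 : 0 ≤ p) (hp1 : p ≤ 1)
    (hinv : ∀ A : Set ℝ, MeasurableSet A →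
      π A = ENNReal.ofReal p * π ((fun y => y + b) ⁻¹' A)
          + ENNReal.ofReal (1 - p) * π ((fun y => y / a) ⁻¹' A)) (x : ℝ) :
    π.real (Ici (x + b)) = p * π.real (Ici x) + (1 - p) * π.real (Ici (a * (x + b))) := by
  have hdiv : (fun y => y / a) ⁻¹' Ici (x + b) = Ici (a * (x + b)) := by
    ext y
    simp [le_div_iff₀ ha, mul_comm]
  have h := congrArg ENNReal.toReal (hinv (Ici (x + b)) measurableSet_Ici)
  rwa [preimage_add_const_Ici, add_sub_cancel_right, hdiv, ENNReal.toReal_add (by finiteness)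
    (by finiteness), ENNReal.toReal_mul, ENNReal.toReal_mul, ENNReal.toReal_ofReal hp0,
    ENNReal.toReal_ofReal (by linarith)] at h

end StationaryTails

theorem stmt2_general (α β : ℕ) (hα : 2 ≤ α) (p : ℝ) (hp0 : 0 < p) (hp : p ≤ 1 / 2)
    (π : Measure ℝ) [IsProbabilityMeasure π]
    (hinv : ∀ A : Set ℝ, MeasurableSet A →
      π A = ENNReal.ofReal p * π ((fun y => y + (β : ℝ)) ⁻¹' A)
          + ENNReal.ofReal (1 - p) * π ((fun y => y / (α : ℝ)) ⁻¹' A)) :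
    ∀ n : ℕ, 1 ≤ n →
      π (Ico ((n : ℝ) * β) (((n : ℝ) + 1) * β)) ≤
        ENNReal.ofReal (p * (1 + p / ((1 - p) * n * ((α : ℝ) - 1)))) *
          π (Ico (((n : ℝ) - 1) * β) ((n : ℝ) * β)) := by
  intro n hn
  obtain ⟨m, rfl⟩ : ∃ m, n = m + 1 := ⟨n - 1, by omega⟩
  set t : ℕ → ℝ := fun k => π.real (Ici (k * β))
  have hrec : ∀ k, t (k + 1) = p * t k + (1 - p) * t (α * (k + 1)) := by
    intro k
    have h := measureReal_Ici_add_eq (by positivity) hp0.le (by linarith) hinv (k * β)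
    simp only [t]
    push_cast
    convert h using 4 <;> ring_nf
  have hbound := sub_succ_le_of_tail_recursion
    (antitone_measureReal_Ici_nat_mul (π := π) β.cast_nonneg) (by linarith) hα hrec m
  have hβ : (0 : ℝ) ≤ β := β.cast_nonneg
  have hα1 : (1 : ℝ) < α := by exact_mod_cast hα
  have h1p : 0 < 1 - p := by linarith
  rw [measure_Ico_eq_ofReal_sub (by nlinarith), measure_Ico_eq_ofReal_sub (by nlinarith),
    ← ENNReal.ofReal_mul (by positivity)]
  refine ENNReal.ofReal_le_ofReal ?_
  convert hbound using 3 <;> push_cast <;> ring_nf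

/-- For every integer `n ≥ 1`,
`π([nβ,(n+1)β)) ≤ p·π([(n-1)β, nβ))·(1 + p/((1-p)·n·(α-1)))`. -/
theorem stmt2 (α β : ℕ) (hα : 2 ≤ α) (hβ : 1 ≤ β) (p : ℝ) (hp0 : 0 < p) (hp : p ≤ 1 / 2)
    (π : Measure ℝ) [IsProbabilityMeasure π] (hsupp : π (Ici (0 : ℝ)) = 1)
    (hinv : ∀ A : Set ℝ, MeasurableSet A →
      π A = ENNReal.ofReal p * π ((fun y => y + (β : ℝ)) ⁻¹' A)
          + ENNReal.ofReal (1 - p) * π ((fun y => y / (α : ℝ)) ⁻¹' A)) :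
    ∀ n : ℕ, 1 ≤ n →
      π (Ico ((n : ℝ) * β) (((n : ℝ) + 1) * β)) ≤
        ENNReal.ofReal (p * (1 + p / ((1 - p) * n * ((α : ℝ) - 1)))) *
          π (Ico (((n : ℝ) - 1) * β) ((n : ℝ) * β)) :=
  stmt2_general α β hα p hp0 hp π hinv
end

section
/- Write M₀ = π([0,β)). There exists a constant K > 1 such that for every integer n ≥ 0, M₀·pⁿ ≤ π([nβ, (n+1)β)) ≤ M₀·K·pⁿ. -/
/-!
Shifting by `β` gives `π([(n+1)β, (n+2)β)) ≥ p · π([nβ, (n+1)β))`, hence the lower bound.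
For the upper bound, the tails `T n = π([nβ, ∞))` satisfy
`T (n+1) ≤ p · T n + (1 - p) · T (2(n+1))` because `α ≥ 2`, with `T 0 = 1` and `T n → 0`;
a discrete maximum principle compares `T` with the supersolution `pⁿ(2 - pⁿ)`, so `T n ≤ 2pⁿ`.
Finally `M₀ > 0`: if `π([0, y)) = 0` then scaling gives `π([0, αy)) = 0`, and iterating
contradicts `π([0, ∞)) = 1`. So `K = 2 / M₀` works.
-/

open MeasureTheory Set Filter Topology

/-- A discrete maximum principle: a positive maximum of `d`, attained because `d → 0`, would
propagate through the recurrence from `m + 1` to `m`, down to `d 0 ≤ 0`. -/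
theorem nonpos_of_le_convexComb_of_tendsto_zero {d : ℕ → ℝ} {σ : ℕ → ℕ} {p : ℝ}
    (hp0 : 0 < p) (hp1 : p ≤ 1) (h0 : d 0 ≤ 0) (hd : Tendsto d atTop (𝓝 0))
    (hrec : ∀ m, d (m + 1) ≤ p * d m + (1 - p) * d (σ m)) (n : ℕ) : d n ≤ 0 := by
  by_contra! hn
  have hfin : {k | d n ≤ d k}.Finite := by
    have hlt := hd.eventually (gt_mem_nhds hn)
    rw [← Nat.cofinite_eq_atTop] at hlt
    simpa using Filter.eventually_cofinite.1 hlt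
  obtain ⟨m, hnm, hmax⟩ := exists_max_image _ d hfin ⟨n, le_refl (d n)⟩
  have hle : ∀ k, d k ≤ d m := fun k =>
    (le_or_gt (d n) (d k)).elim (hmax k) (fun h => h.le.trans hnm)
  have hne : ∀ k, d k ≠ d m := by
    intro k
    induction k with
    | zero => exact (h0.trans_lt (hn.trans_le hnm)).ne
    | succ k ih =>
      intro hk
      have hσ := mul_le_mul_of_nonneg_left (hle (σ k)) (sub_nonneg.2 hp1)
      have hpk : p * d m ≤ p * d k := by linarith [hrec k]
      exact ih (le_antisymm (hle k) (le_of_mul_le_mul_left hpk hp0))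
  exact hne m rfl

theorem pow_mul_two_sub_pow_supersolution {p : ℝ} (hp0 : 0 < p) (hp : p ≤ 1 / 2) (m : ℕ) :
    p * (p ^ m * (2 - p ^ m)) + (1 - p) * (p ^ (2 * (m + 1)) * (2 - p ^ (2 * (m + 1)))) ≤
      p ^ (m + 1) * (2 - p ^ (m + 1)) := by
  have hgap : p ^ (m + 1) * (2 - p ^ (m + 1)) -
      (p * (p ^ m * (2 - p ^ m)) + (1 - p) * (p ^ (2 * (m + 1)) * (2 - p ^ (2 * (m + 1))))) =
      p * p ^ (2 * m) * (1 - p) * (1 - p * (2 - p ^ (2 * (m + 1)))) := by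
    ring
  have hfactor : 0 ≤ 1 - p * (2 - p ^ (2 * (m + 1))) := by
    nlinarith [pow_nonneg hp0.le (2 * (m + 1))]
  have := mul_nonneg (mul_nonneg (by positivity : 0 ≤ p * p ^ (2 * m))
    (by linarith : 0 ≤ 1 - p)) hfactor
  linarith

theorem tendsto_measure_Ici_atTop (μ : Measure ℝ) [IsFiniteMeasure μ] :
    Tendsto (fun x => μ (Ici x)) atTop (𝓝 0) := by
  have hempty : ⋂ x : ℝ, Ici x = ∅ := by
    rw [← not_nonempty_iff_eq_empty, nonempty_iInter_Ici_iff, range_id']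
    exact not_bddAbove_univ
  have h := tendsto_measure_iInter_atTop (μ := μ)
    (fun x => measurableSet_Ici.nullMeasurableSet) antitone_Ici ⟨0, measure_ne_top μ _⟩
  rwa [hempty, measure_empty] at h

theorem preimage_div_const_Ico₀ {a : ℝ} (ha : 0 < a) (x y : ℝ) :
    (fun z => z / a) ⁻¹' Ico x y = Ico (x * a) (y * a) := by
  simpa [div_eq_mul_inv] using preimage_mul_const_Ico₀ x y (inv_pos.2 ha)

theorem preimage_div_const_Ici₀ {a : ℝ} (ha : 0 < a) (x : ℝ) :
    (fun z => z / a) ⁻¹' Ici x = Ici (x * a) := by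
  simpa [div_eq_mul_inv] using preimage_mul_const_Ici₀ x (inv_pos.2 ha)

def IsShiftScaleStationary (π : Measure ℝ) (p a b : ℝ) : Prop :=
  ∀ A : Set ℝ, MeasurableSet A →
    π A = ENNReal.ofReal p * π ((fun y => y + b) ⁻¹' A)
      + ENNReal.ofReal (1 - p) * π ((fun y => y / a) ⁻¹' A)

namespace IsShiftScaleStationary

variable {π : Measure ℝ} {p a b : ℝ}

theorem shift_le (hπ : IsShiftScaleStationary π p a b) {A : Set ℝ} (hA : MeasurableSet A) :
    ENNReal.ofReal p * π ((fun y => y + b) ⁻¹' A) ≤ π A :=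
  (hπ A hA).symm ▸ le_self_add

theorem scale_le (hπ : IsShiftScaleStationary π p a b) {A : Set ℝ} (hA : MeasurableSet A) :
    ENNReal.ofReal (1 - p) * π ((fun y => y / a) ⁻¹' A) ≤ π A :=
  (hπ A hA).symm ▸ le_add_self

theorem pow_mul_measure_Ico_le (hπ : IsShiftScaleStationary π p a b) (hp : 0 ≤ p) (x y : ℝ)
    (n : ℕ) :
    ENNReal.ofReal (p ^ n) * π (Ico x y) ≤ π (Ico (x + n * b) (y + n * b)) := by
  induction n with
  | zero => simp
  | succ n ih =>
    calc ENNReal.ofReal (p ^ (n + 1)) * π (Ico x y)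
        = ENNReal.ofReal p * (ENNReal.ofReal (p ^ n) * π (Ico x y)) := by
          rw [← mul_assoc, ← ENNReal.ofReal_mul hp, pow_succ']
      _ ≤ ENNReal.ofReal p * π (Ico (x + n * b) (y + n * b)) := by gcongr
      _ ≤ π (Ico (x + (n + 1 : ℕ) * b) (y + (n + 1 : ℕ) * b)) := by
          convert hπ.shift_le measurableSet_Ico using 3
          rw [preimage_add_const_Ico]
          push_cast
          ring_nf

theorem measure_Ico_zero_mul_eq_zero (hπ : IsShiftScaleStationary π p a b) (hp : p < 1)
    (ha : 0 < a) {y : ℝ} (hy : π (Ico 0 y) = 0) : π (Ico 0 (y * a)) = 0 := by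
  have h := hπ.scale_le (A := Ico 0 y) measurableSet_Ico
  rw [preimage_div_const_Ico₀ ha, zero_mul, hy, nonpos_iff_eq_zero, mul_eq_zero] at h
  exact h.resolve_left (by simpa using hp)

theorem measure_Ico_zero_ne_zero (hπ : IsShiftScaleStationary π p a b) (hp : p < 1)
    (ha : 1 < a) (hπ0 : π (Ici 0) ≠ 0) {y : ℝ} (hy : 0 < y) : π (Ico 0 y) ≠ 0 := by
  intro h0
  have hnull : ∀ k : ℕ, π (Ico 0 (y * a ^ k)) = 0 := by
    intro k
    induction k with
    | zero => simpa using h0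
    | succ k ih =>
      rw [pow_succ, ← mul_assoc]
      exact hπ.measure_Ico_zero_mul_eq_zero hp (by linarith) ih
  have hcover : Ici 0 ⊆ ⋃ k : ℕ, Ico 0 (y * a ^ k) := by
    intro x hx
    obtain ⟨k, hk⟩ := pow_unbounded_of_one_lt (x / y) ha
    exact mem_iUnion.2 ⟨k, hx, by rwa [div_lt_iff₀' hy] at hk⟩
  exact hπ0 (measure_mono_null hcover (measure_iUnion_null hnull))

theorem measure_Ici_le (hπ : IsShiftScaleStationary π p a b) (ha : 2 ≤ a) {y : ℝ}
    (hy : 0 ≤ y) :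
    π (Ici y) ≤ ENNReal.ofReal p * π (Ici (y - b)) + ENNReal.ofReal (1 - p) * π (Ici (2 * y)) := by
  rw [hπ _ measurableSet_Ici, preimage_add_const_Ici, preimage_div_const_Ici₀ (by linarith)]
  gcongr _ + _ * ?_
  exact measure_mono (Ici_subset_Ici.2 (by nlinarith))

theorem measureReal_Ici_le [IsFiniteMeasure π] (hπ : IsShiftScaleStationary π p a b)
    (hp0 : 0 ≤ p) (hp1 : p ≤ 1) (ha : 2 ≤ a) {y : ℝ} (hy : 0 ≤ y) :
    π.real (Ici y) ≤ p * π.real (Ici (y - b)) + (1 - p) * π.real (Ici (2 * y)) := by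
  have h := ENNReal.toReal_mono (by finiteness) (hπ.measure_Ici_le ha hy)
  rwa [ENNReal.toReal_add (by finiteness) (by finiteness), ENNReal.toReal_mul,
    ENNReal.toReal_mul, ENNReal.toReal_ofReal hp0, ENNReal.toReal_ofReal (sub_nonneg.2 hp1)] at h

theorem measureReal_Ici_natCast_mul_le [IsProbabilityMeasure π]
    (hπ : IsShiftScaleStationary π p a b) (hp0 : 0 < p) (hp : p ≤ 1 / 2) (ha : 2 ≤ a)
    (hb : 0 < b) (hsupp : π (Ici 0) = 1) (n : ℕ) :
    π.real (Ici (n * b)) ≤ p ^ n * (2 - p ^ n) := by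
  have hp1 : p < 1 := by linarith
  have hpow : Tendsto (fun n : ℕ => p ^ n) atTop (𝓝 0) :=
    tendsto_pow_atTop_nhds_zero_of_lt_one hp0.le hp1
  have htail : Tendsto (fun n : ℕ => π.real (Ici (n * b))) atTop (𝓝 0) :=
    (ENNReal.tendsto_toReal ENNReal.zero_ne_top).comp <| (tendsto_measure_Ici_atTop π).comp <|
      tendsto_natCast_atTop_atTop.atTop_mul_const hb
  have hrec (m : ℕ) : π.real (Ici ((m + 1 : ℕ) * b)) ≤
      p * π.real (Ici (m * b)) + (1 - p) * π.real (Ici ((2 * (m + 1) : ℕ) * b)) := by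
    have h := hπ.measureReal_Ici_le hp0.le hp1.le ha (y := (m + 1 : ℕ) * b) (by positivity)
    rwa [show ((m + 1 : ℕ) : ℝ) * b - b = m * b by push_cast; ring,
      show 2 * (((m + 1 : ℕ) : ℝ) * b) = ((2 * (m + 1) : ℕ) : ℝ) * b by push_cast; ring] at h
  refine sub_nonpos.1 <| nonpos_of_le_convexComb_of_tendsto_zero
    (d := fun n => π.real (Ici (n * b)) - p ^ n * (2 - p ^ n)) (σ := fun m => 2 * (m + 1))
    hp0 hp1.le ?_ ?_ (fun m => ?_) n
  · norm_num [measureReal_def, hsupp]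
  · simpa using htail.sub (hpow.mul (tendsto_const_nhds.sub hpow))
  · have := pow_mul_two_sub_pow_supersolution hp0 hp m
    linarith [hrec m]

end IsShiftScaleStationary

/-- Lemma `inteq1`: writing `M₀ = π([0,β))`, there is a constant `K > 1` such that
`M₀·pⁿ ≤ π([nβ,(n+1)β)) ≤ M₀·K·pⁿ` for all integers `n ≥ 0`. -/
theorem stmt3 (α β : ℕ) (hα : 2 ≤ α) (hβ : 1 ≤ β) (p : ℝ) (hp0 : 0 < p) (hp : p ≤ 1 / 2)
    (π : Measure ℝ) [IsProbabilityMeasure π] (hsupp : π (Ici (0 : ℝ)) = 1)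
    (hinv : ∀ A : Set ℝ, MeasurableSet A →
      π A = ENNReal.ofReal p * π ((fun y => y + (β : ℝ)) ⁻¹' A)
          + ENNReal.ofReal (1 - p) * π ((fun y => y / (α : ℝ)) ⁻¹' A)) :
    ∃ K : ℝ, 1 < K ∧ ∀ n : ℕ,
      ENNReal.ofReal (p ^ n) * π (Ico (0 : ℝ) (β : ℝ)) ≤
          π (Ico ((n : ℝ) * β) (((n : ℝ) + 1) * β)) ∧
        π (Ico ((n : ℝ) * β) (((n : ℝ) + 1) * β)) ≤
          ENNReal.ofReal (K * p ^ n) * π (Ico (0 : ℝ) (β : ℝ)) := by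
  have hπ : IsShiftScaleStationary π p α β := hinv
  have hα' : (2 : ℝ) ≤ α := by exact_mod_cast hα
  have hβ' : (0 : ℝ) < β := by exact_mod_cast hβ
  have hM₀ : 0 < π.real (Ico 0 β) := ENNReal.toReal_pos
    (hπ.measure_Ico_zero_ne_zero (by linarith) (by linarith) (by simp [hsupp]) hβ') (by finiteness)
  have hM₀_le : π.real (Ico 0 β) ≤ 1 := measureReal_le_one
  refine ⟨2 / π.real (Ico 0 β), (one_lt_div hM₀).2 (by linarith), fun n => ⟨?_, ?_⟩⟩
  · convert hπ.pow_mul_measure_Ico_le hp0.le 0 β n using 3 <;> ring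
  · have htail := hπ.measureReal_Ici_natCast_mul_le hp0 hp hα' hβ' hsupp n
    calc π (Ico ((n : ℝ) * β) (((n : ℝ) + 1) * β)) ≤ π (Ici (n * β)) :=
          measure_mono Ico_subset_Ici_self
      _ = ENNReal.ofReal (π.real (Ici (n * β))) := (ofReal_measureReal).symm
      _ ≤ ENNReal.ofReal (2 / π.real (Ico 0 β) * p ^ n * π.real (Ico 0 β)) := by
          refine ENNReal.ofReal_le_ofReal ?_
          rw [div_mul_eq_mul_div, div_mul_cancel₀ _ hM₀.ne']
          nlinarith [pow_pos hp0 n]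
      _ = ENNReal.ofReal (2 / π.real (Ico 0 β) * p ^ n) * π (Ico 0 β) := by
          rw [ENNReal.ofReal_mul (by positivity), ofReal_measureReal]
end

section
/- For all integers n ≥ 0 and k ≥ 1, π([nβ/α^k, (n+1)β/α^k)) = (1−p)·Σ_{j=0}^{⌊n/α^k⌋} p^j · π([nβ/α^{k−1} − jαβ, (n+1)β/α^{k−1} − jαβ)). -/
open MeasureTheory Set

/-!
Applying the invariance equation to `Iₙ = [nβ/αᵏ, (n+1)β/αᵏ)` gives
`π(Iₙ) = p·π(Iₙ₋N) + (1-p)·π(α·Iₙ)` with `N = αᵏ`, where the first term is absent when `n < N`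
because then `Iₙ - β` lies in the `π`-null half-line `(-∞, 0)`. Unrolling this recurrence
`⌊n/N⌋` times gives the sum, since `α·Iₙ₋ⱼN = α·Iₙ - jαβ`.
-/

lemma eq_mul_sum_of_eq_ite_add {R : Type*} [CommSemiring R] {f g : ℕ → R} {N : ℕ} (hN : 0 < N)
    {q r : R} (hf : ∀ n, f n = (if N ≤ n then q * f (n - N) else 0) + r * g n) (n : ℕ) :
    f n = r * ∑ j ∈ Finset.range (n / N + 1), q ^ j * g (n - j * N) := by
  induction n using Nat.strong_induction_on with
  | _ n ih =>
  rw [hf n]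
  split_ifs with h
  · obtain ⟨m, rfl⟩ := Nat.exists_eq_add_of_le h
    have hshift : ∀ j : ℕ, N + m - (j + 1) * N = m - j * N := fun j => by
      rw [add_one_mul, add_comm (j * N), ← Nat.sub_sub, Nat.add_sub_cancel_left]
    rw [Nat.add_sub_cancel_left, ih m (by omega), Nat.add_div_left _ hN,
      Finset.sum_range_succ' (fun j => q ^ j * g (N + m - j * N))]
    simp only [hshift, zero_mul, Nat.sub_zero, pow_zero, one_mul, Finset.mul_sum, mul_add]
    congr 1
    exact Finset.sum_congr rfl fun j _ => by ring
  · simp [Nat.div_eq_of_lt (not_le.1 h)]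

lemma measure_Ico_eq_ite_add_of_invariant {π : Measure ℝ} {P Q : ENNReal} {s a c : ℝ} {N : ℕ}
    (ha : 0 < a) (hc : 0 ≤ c) (hs : N * c = s) (hneg : π (Iio 0) = 0)
    (hinv : ∀ A : Set ℝ, MeasurableSet A →
      π A = P * π ((fun y => y + s) ⁻¹' A) + Q * π ((fun y => y / a) ⁻¹' A)) (n : ℕ) :
    π (Ico (n * c) ((n + 1) * c)) =
      (if N ≤ n then P * π (Ico ((n - N : ℕ) * c) (((n - N : ℕ) + 1) * c)) else 0) +
        Q * π (Ico (n * c * a) ((n + 1) * c * a)) := by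
  have hdiv : (fun y => y / a) ⁻¹' Ico (n * c) ((n + 1) * c) = Ico (n * c * a) ((n + 1) * c * a) := by
    ext y
    simp only [mem_preimage, mem_Ico, le_div_iff₀ ha, div_lt_iff₀ ha]
  rw [hinv _ measurableSet_Ico, preimage_add_const_Ico, hdiv, ← hs]
  split_ifs with h
  · push_cast [h]
    ring_nf
  · have hnonpos : (n + 1) * c - N * c ≤ 0 := by
      rw [sub_nonpos]
      gcongr
      exact_mod_cast not_le.1 h
    rw [measure_mono_null (Ico_subset_Iio_self.trans (Iio_subset_Iio hnonpos)) hneg, mul_zero]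

theorem stmt4_general (α β : ℕ) (hα : 2 ≤ α) (p : ℝ) (hp0 : 0 < p)
    (π : Measure ℝ) [IsProbabilityMeasure π] (hsupp : π (Ici (0 : ℝ)) = 1)
    (hinv : ∀ A : Set ℝ, MeasurableSet A →
      π A = ENNReal.ofReal p * π ((fun y => y + (β : ℝ)) ⁻¹' A)
          + ENNReal.ofReal (1 - p) * π ((fun y => y / (α : ℝ)) ⁻¹' A)) :
    ∀ n k : ℕ, 1 ≤ k →
      π (Ico ((n : ℝ) * β / (α : ℝ) ^ k) (((n : ℝ) + 1) * β / (α : ℝ) ^ k)) =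
        ENNReal.ofReal (1 - p) *
          ∑ j ∈ Finset.range (n / α ^ k + 1),
            ENNReal.ofReal (p ^ j) *
              π (Ico ((n : ℝ) * β / (α : ℝ) ^ (k - 1) - (j : ℝ) * α * β)
                     (((n : ℝ) + 1) * β / (α : ℝ) ^ (k - 1) - (j : ℝ) * α * β)) := by
  intro n k hk
  obtain ⟨k, rfl⟩ := Nat.exists_eq_add_of_le' hk
  rw [Nat.add_sub_cancel]
  have hα0 : (0 : ℝ) < α := Nat.cast_pos.2 (by omega)
  have hneg : π (Iio 0) = 0 := by
    rw [← compl_Ici, prob_compl_eq_zero_iff measurableSet_Ici]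
    exact hsupp
  have hscale : β / (α : ℝ) ^ (k + 1) * α = β / (α : ℝ) ^ k := by
    rw [pow_succ]
    field_simp
  have hrec := measure_Ico_eq_ite_add_of_invariant (N := α ^ (k + 1)) (c := β / (α : ℝ) ^ (k + 1))
    hα0 (by positivity) (by push_cast; field_simp) hneg hinv
  have hsum := eq_mul_sum_of_eq_ite_add (pow_pos (by omega) _) hrec n
  simp only [mul_assoc, hscale] at hsum
  simp only [mul_div_assoc, hsum]
  congr 1
  refine Finset.sum_congr rfl fun j hj => ?_
  have hjn : j * α ^ (k + 1) ≤ n :=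
    (Nat.mul_le_mul_right _ (Finset.mem_range_succ_iff.1 hj)).trans (Nat.div_mul_le_self n _)
  rw [ENNReal.ofReal_pow hp0.le]
  congr 3 <;> · push_cast [hjn]; field_simp; ring

/-- Lemma `intexp`: for all integers `n ≥ 0` and `k ≥ 1`,
`π([nβ/α^k, (n+1)β/α^k)) = (1-p)·Σ_{j=0}^{⌊n/α^k⌋} p^j·π([nβ/α^{k-1} - jαβ, (n+1)β/α^{k-1} - jαβ))`. -/
theorem stmt4 (α β : ℕ) (hα : 2 ≤ α) (hβ : 1 ≤ β) (p : ℝ) (hp0 : 0 < p) (hp1 : p < 1)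
    (π : Measure ℝ) [IsProbabilityMeasure π] (hsupp : π (Ici (0 : ℝ)) = 1)
    (hinv : ∀ A : Set ℝ, MeasurableSet A →
      π A = ENNReal.ofReal p * π ((fun y => y + (β : ℝ)) ⁻¹' A)
          + ENNReal.ofReal (1 - p) * π ((fun y => y / (α : ℝ)) ⁻¹' A)) :
    ∀ n k : ℕ, 1 ≤ k →
      π (Ico ((n : ℝ) * β / (α : ℝ) ^ k) (((n : ℝ) + 1) * β / (α : ℝ) ^ k)) =
        ENNReal.ofReal (1 - p) *
          ∑ j ∈ Finset.range (n / α ^ k + 1),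
            ENNReal.ofReal (p ^ j) *
              π (Ico ((n : ℝ) * β / (α : ℝ) ^ (k - 1) - (j : ℝ) * α * β)
                     (((n : ℝ) + 1) * β / (α : ℝ) ^ (k - 1) - (j : ℝ) * α * β)) :=
  stmt4_general α β hα p hp0 π hsupp hinv
end

section
/- Let α ≥ 2, t ≥ 1, j ≥ 0 and n be integers with n ≥ j·α^t. Then g(n − j·α^t, t−1) = g(n, t−1) − j·α. -/
/-! Writing `n = m + j·α^t`, every quotient `⌊n/α^i⌋` with `i < t` is exactly `⌊m/α^i⌋ + j·α^(t-i)`,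
so the difference `g(n, t-1) - g(m, t-1)` is `j·α^(t+1) + (1-α)·j·(α + ⋯ + α^t)`,
which telescopes to `j·α`. -/

def g (α n k : ℕ) : ℤ :=
  (n : ℤ) * α + (1 - (α : ℤ)) * ∑ i ∈ Finset.range (k + 1), ((n / α ^ i : ℕ) : ℤ)

open Finset

theorem Nat.add_mul_pow_div_pow {α : ℕ} (hα : 0 < α) (m j : ℕ) {i t : ℕ} (hi : i ≤ t) :
    (m + j * α ^ t) / α ^ i = m / α ^ i + j * α ^ (t - i) := by
  rw [← Nat.pow_sub_mul_pow α hi, ← mul_assoc, mul_comm, Nat.add_mul_div_left _ _ (pow_pos hα i)]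

theorem one_sub_mul_sum_range_pow_sub {R : Type*} [CommRing R] (x : R) (k : ℕ) :
    (1 - x) * ∑ i ∈ range (k + 1), x ^ (k + 1 - i) = x - x ^ (k + 2) := by
  have hreflect : ∑ i ∈ range (k + 1), x ^ (k + 1 - i) = x * ∑ i ∈ range (k + 1), x ^ i := by
    rw [← sum_range_reflect, mul_sum]
    refine sum_congr rfl fun i hi => ?_
    rw [show k + 1 - (k + 1 - 1 - i) = i + 1 by grind, pow_succ']
  rw [hreflect, mul_left_comm, mul_neg_geom_sum]
  ring

theorem g_add_mul_pow_succ {α : ℕ} (hα : 0 < α) (m j k : ℕ) :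
    g α (m + j * α ^ (k + 1)) k = g α m k + j * α := by
  have hquot : ∀ i ∈ range (k + 1), (((m + j * α ^ (k + 1)) / α ^ i : ℕ) : ℤ)
      = ((m / α ^ i : ℕ) : ℤ) + j * (α : ℤ) ^ (k + 1 - i) := fun i hi => by
    rw [Nat.add_mul_pow_div_pow hα m j (by grind)]
    push_cast; rfl
  have hgeom := one_sub_mul_sum_range_pow_sub (α : ℤ) k
  simp only [g, sum_congr rfl hquot, sum_add_distrib, ← mul_sum]
  push_cast
  linear_combination (j : ℤ) * hgeom

/-- If `α ≥ 2`, `t ≥ 1`, `j ≥ 0` and `n ≥ j·α^t`, then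
`g(n - j·α^t, t-1) = g(n, t-1) - j·α`. -/
theorem stmt7 (α t j n : ℕ) (hα : 2 ≤ α) (ht : 1 ≤ t) (hn : j * α ^ t ≤ n) :
    g α (n - j * α ^ t) (t - 1) = g α n (t - 1) - (j : ℤ) * α := by
  obtain ⟨k, rfl⟩ : ∃ k, t = k + 1 := ⟨t - 1, by omega⟩
  obtain ⟨m, rfl⟩ := Nat.exists_eq_add_of_le hn
  rw [Nat.add_sub_cancel_left, Nat.add_sub_cancel, add_comm, g_add_mul_pow_succ (by omega)]
  ring
end

section
/- The upper Hausdorff dimension of π satisfies dim_H^* π ≤ (Σ_{i=0}^{α−1} ξ_i·log ξ_i)/log(α^{−1}), with the convention 0·log 0 = 0. (First part of the main theorem.) -/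
/-!
The chain contracts on average (the translation by `β` is an isometry, the division by `α`
contracts by `α⁻¹`), so its stationary probability measure is unique, and every set invariant
under both maps has measure `0` or `1`. The translation by `β` leaves the base-`α` digits after
the point unchanged and the division by `α` shifts them by one place, so under `π` every digit
has the law `θ` of `⌊x⌋ mod α`, which is `ξ` because `π` lives on `[0, ∞)`. Hence the
information `Iₙ(x) = -Σ_{i ≤ n} log θ(dᵢ(x))` of the first `n` digits has integral `n H`, where
`H = -Σ θⱼ log θⱼ`; since `liminf Iₙ / n` is invariant, Fatou and the 0-1 law bound it by `H`
almost everywhere. By Borel–Cantelli the `n`-th cylinder of `x`, which lies in the ball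
`B(x, α⁻ⁿ)`, eventually has measure at least `e^{-εn} π(⌊·⌋ = ⌊x⌋) e^{-Iₙ(x)}`; along the `n`
with `Iₙ(x) ≤ n (H + ε)` this gives `π(B(x, α⁻ⁿ)) ≥ c e^{-n(H + 2ε)}`, so
`dim̲π(x) ≤ (H + 2ε) / log α`.
-/

open MeasureTheory Set Filter

/-- The lower local dimension `liminf_{r→0+} log π(B(x,r))/log r`. -/
noncomputable def lowerLocalDim (π : Measure ℝ) (x : ℝ) : ℝ :=
  liminf (fun r : ℝ => Real.log (π (Metric.ball x r)).toReal / Real.log r)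
    (nhdsWithin 0 (Ioi 0))

/-- `ξ_k = Σ_{m=0}^∞ π([mα+k, mα+k+1))`, as a real number. -/
noncomputable def xi (α : ℕ) (π : Measure ℝ) (k : ℕ) : ℝ :=
  (∑' m : ℕ, π (Ico ((m : ℝ) * α + k) ((m : ℝ) * α + k + 1))).toReal

open scoped ENNReal NNReal Topology ProbabilityTheory

section TransferOperator

variable {X : Type*} {p : ℝ} {f g : X → X}

def transferOp (p : ℝ) (f g : X → X) (φ : X → ℝ) (x : X) : ℝ :=
  p * φ (f x) + (1 - p) * φ (g x)

lemma abs_transferOp_le (hp0 : 0 ≤ p) (hp1 : p ≤ 1) {φ : X → ℝ} {C : ℝ} (hC : ∀ x, |φ x| ≤ C)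
    (x : X) : |transferOp p f g φ x| ≤ C := by
  unfold transferOp
  calc _ ≤ |p * φ (f x)| + |(1 - p) * φ (g x)| := abs_add_le _ _
    _ = p * |φ (f x)| + (1 - p) * |φ (g x)| := by
      rw [abs_mul, abs_mul, abs_of_nonneg hp0, abs_of_nonneg (sub_nonneg.2 hp1)]
    _ ≤ p * C + (1 - p) * C := by gcongr <;> exact hC _
    _ = C := by ring

lemma abs_transferOp_iterate_le (hp0 : 0 ≤ p) (hp1 : p ≤ 1) {φ : X → ℝ} {C : ℝ}
    (hC : ∀ x, |φ x| ≤ C) (n : ℕ) (x : X) : |(transferOp p f g)^[n] φ x| ≤ C := by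
  induction n generalizing x with
  | zero => exact hC x
  | succ n ih =>
    rw [Function.iterate_succ_apply']
    exact abs_transferOp_le hp0 hp1 ih x

lemma measurable_transferOp_iterate [MeasurableSpace X] (hf : Measurable f) (hg : Measurable g)
    {φ : X → ℝ} (hφ : Measurable φ) (n : ℕ) : Measurable ((transferOp p f g)^[n] φ) := by
  induction n with
  | zero => exact hφ
  | succ n ih =>
    rw [Function.iterate_succ_apply']
    exact ((ih.comp hf).const_mul p).add ((ih.comp hg).const_mul _)

variable [PseudoMetricSpace X] {Kf Kg : ℝ≥0}

lemma abs_transferOp_sub_le (hf : LipschitzWith Kf f) (hg : LipschitzWith Kg g) (hp0 : 0 ≤ p)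
    (hp1 : p ≤ 1) {φ : X → ℝ} {L : ℝ} (hL : 0 ≤ L) (hφ : ∀ x y, |φ x - φ y| ≤ L * dist x y)
    (x y : X) :
    |transferOp p f g φ x - transferOp p f g φ y| ≤ (p * Kf + (1 - p) * Kg) * L * dist x y := by
  unfold transferOp
  have h1 : |φ (f x) - φ (f y)| ≤ L * (Kf * dist x y) :=
    (hφ _ _).trans (mul_le_mul_of_nonneg_left (hf.dist_le_mul x y) hL)
  have h2 : |φ (g x) - φ (g y)| ≤ L * (Kg * dist x y) :=
    (hφ _ _).trans (mul_le_mul_of_nonneg_left (hg.dist_le_mul x y) hL)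
  calc _ = |p * (φ (f x) - φ (f y)) + (1 - p) * (φ (g x) - φ (g y))| := by congr 1; ring
    _ ≤ p * |φ (f x) - φ (f y)| + (1 - p) * |φ (g x) - φ (g y)| := by
      refine (abs_add_le _ _).trans_eq ?_
      rw [abs_mul, abs_mul, abs_of_nonneg hp0, abs_of_nonneg (sub_nonneg.2 hp1)]
    _ ≤ p * (L * (Kf * dist x y)) + (1 - p) * (L * (Kg * dist x y)) := by gcongr
    _ = _ := by ring

lemma abs_transferOp_iterate_sub_le (hf : LipschitzWith Kf f) (hg : LipschitzWith Kg g)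
    (hp0 : 0 ≤ p) (hp1 : p ≤ 1) {φ : X → ℝ} {L : ℝ} (hL : 0 ≤ L)
    (hφ : ∀ x y, |φ x - φ y| ≤ L * dist x y) (n : ℕ) (x y : X) :
    |(transferOp p f g)^[n] φ x - (transferOp p f g)^[n] φ y|
      ≤ (p * Kf + (1 - p) * Kg) ^ n * L * dist x y := by
  have : 0 ≤ p * Kf + (1 - p) * Kg := by
    have := sub_nonneg.2 hp1
    positivity
  induction n generalizing x y with
  | zero => simpa using hφ x y
  | succ n ih =>
    simp only [Function.iterate_succ_apply']
    exact (abs_transferOp_sub_le hf hg hp0 hp1 (by positivity) ih x y).trans_eq (by ring)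

end TransferOperator

section StationaryMeasure

variable {X : Type*} [MeasurableSpace X] {p : ℝ} {f g : X → X} {μ : Measure X}

def IsStationaryMeasure (p : ℝ) (f g : X → X) (μ : Measure X) : Prop :=
  ∀ A : Set X, MeasurableSet A →
    μ A = ENNReal.ofReal p * μ (f ⁻¹' A) + ENNReal.ofReal (1 - p) * μ (g ⁻¹' A)

namespace IsStationaryMeasure

lemma measure_eq_of_preimage_eq [IsFiniteMeasure μ] (h : IsStationaryMeasure p f g μ)
    (hp0 : 0 ≤ p) (hp1 : p < 1) {A B : Set X} (hA : MeasurableSet A) (hfA : f ⁻¹' A = A)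
    (hgA : g ⁻¹' A = B) : μ A = μ B := by
  have hreal := congrArg ENNReal.toReal (h A hA)
  rw [hfA, hgA, ENNReal.toReal_add (by finiteness) (by finiteness), ENNReal.toReal_mul,
    ENNReal.toReal_mul, ENNReal.toReal_ofReal hp0, ENNReal.toReal_ofReal (by linarith)] at hreal
  refine (ENNReal.toReal_eq_toReal_iff' (measure_ne_top μ A) (measure_ne_top μ B)).mp ?_
  nlinarith

lemma cond (h : IsStationaryMeasure p f g μ) {B : Set X} (hB : MeasurableSet B)
    (hfB : f ⁻¹' B = B) (hgB : g ⁻¹' B = B) : IsStationaryMeasure p f g μ[|B] := by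
  intro A hA
  simp only [ProbabilityTheory.cond_apply hB, h (B ∩ A) (hB.inter hA), preimage_inter, hfB, hgB]
  ring

lemma measure_eq_zero_or_one [IsProbabilityMeasure μ] (h : IsStationaryMeasure p f g μ)
    (huniq : ∀ ν : Measure X, IsProbabilityMeasure ν → IsStationaryMeasure p f g ν → ν = μ)
    {B : Set X} (hB : MeasurableSet B) (hfB : f ⁻¹' B = B) (hgB : g ⁻¹' B = B) :
    μ B = 0 ∨ μ B = 1 := by
  by_cases hB0 : μ B = 0
  · exact .inl hB0
  have := ProbabilityTheory.cond_isProbabilityMeasure (μ := μ) hB0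
  rw [← huniq _ this (h.cond hB hfB hgB)]
  exact .inr (ProbabilityTheory.cond_apply_self hB0 (measure_ne_top μ B))

lemma integral_transferOp [IsFiniteMeasure μ] (h : IsStationaryMeasure p f g μ)
    (hf : Measurable f) (hg : Measurable g) (hp0 : 0 ≤ p) (hp1 : p ≤ 1) {φ : X → ℝ}
    (hφ : Measurable φ) {C : ℝ} (hC : ∀ x, |φ x| ≤ C) :
    ∫ x, transferOp p f g φ x ∂μ = ∫ x, φ x ∂μ := by
  have hbdd {ν : Measure X} [IsFiniteMeasure ν] {ψ : X → ℝ} (hψ : Measurable ψ)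
      (hψC : ∀ x, |ψ x| ≤ C) : Integrable ψ ν :=
    (integrable_const C).mono' hψ.aestronglyMeasurable (.of_forall hψC)
  have hμ : μ = ENNReal.ofReal p • μ.map f + ENNReal.ofReal (1 - p) • μ.map g := by
    ext A hA
    simp [h A hA, Measure.map_apply hf hA, Measure.map_apply hg hA]
  conv_rhs => rw [hμ]
  rw [integral_add_measure ((hbdd hφ hC).smul_measure ENNReal.ofReal_ne_top)
      ((hbdd hφ hC).smul_measure ENNReal.ofReal_ne_top), integral_smul_measure,
    integral_smul_measure, integral_map hf.aemeasurable hφ.aestronglyMeasurable,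
    integral_map hg.aemeasurable hφ.aestronglyMeasurable, ENNReal.toReal_ofReal hp0,
    ENNReal.toReal_ofReal (by linarith), smul_eq_mul, smul_eq_mul, ← integral_const_mul,
    ← integral_const_mul]
  exact integral_add ((hbdd (hφ.comp hf) fun x => hC (f x)).const_mul p)
    ((hbdd (hφ.comp hg) fun x => hC (g x)).const_mul _)

lemma integral_transferOp_iterate [IsFiniteMeasure μ] (h : IsStationaryMeasure p f g μ)
    (hf : Measurable f) (hg : Measurable g) (hp0 : 0 ≤ p) (hp1 : p ≤ 1) {φ : X → ℝ}
    (hφ : Measurable φ) {C : ℝ} (hC : ∀ x, |φ x| ≤ C) (n : ℕ) :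
    ∫ x, (transferOp p f g)^[n] φ x ∂μ = ∫ x, φ x ∂μ := by
  induction n with
  | zero => rfl
  | succ n ih =>
    rw [Function.iterate_succ_apply', h.integral_transferOp hf hg hp0 hp1
      (measurable_transferOp_iterate hf hg hφ n) (abs_transferOp_iterate_le hp0 hp1 hC n), ih]

variable [PseudoMetricSpace X] [BorelSpace X] {Kf Kg : ℝ≥0}

/-- The `n`-th iterate of the transfer operator has the same integral as `φ` under both
measures, while its oscillation between two points tends to zero. -/
lemma integral_eq_of_lipschitz (hf : LipschitzWith Kf f) (hg : LipschitzWith Kg g)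
    (hp0 : 0 ≤ p) (hp1 : p ≤ 1) (hcontr : p * Kf + (1 - p) * Kg < 1) {ν : Measure X}
    [IsProbabilityMeasure μ] [IsProbabilityMeasure ν] (hμ : IsStationaryMeasure p f g μ)
    (hν : IsStationaryMeasure p f g ν) {φ : X → ℝ} {C : ℝ} (hC : ∀ x, |φ x| ≤ C) {L : ℝ≥0}
    (hL : LipschitzWith L φ) : ∫ x, φ x ∂μ = ∫ x, φ x ∂ν := by
  set ψ := fun n => (transferOp p f g)^[n] φ
  have hφm := hL.continuous.measurable
  have hfm := hf.continuous.measurable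
  have hgm := hg.continuous.measurable
  have hψm n : Measurable (ψ n) := measurable_transferOp_iterate hfm hgm hφm n
  have hψC n x : |ψ n x| ≤ C := abs_transferOp_iterate_le hp0 hp1 hC n x
  have hint n (ρ : Measure X) [IsFiniteMeasure ρ] : Integrable (ψ n) ρ :=
    (integrable_const C).mono' (hψm n).aestronglyMeasurable (.of_forall (hψC n))
  have hdiff n : ∫ z, ψ n z.1 - ψ n z.2 ∂μ.prod ν = ∫ x, φ x ∂μ - ∫ x, φ x ∂ν := by
    rw [integral_sub ((hint n μ).comp_fst ν) ((hint n ν).comp_snd μ), integral_fun_fst,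
      integral_fun_snd, probReal_univ, probReal_univ, one_smul, one_smul,
      hμ.integral_transferOp_iterate hfm hgm hp0 hp1 hφm hC,
      hν.integral_transferOp_iterate hfm hgm hp0 hp1 hφm hC]
  have hlim : Tendsto (fun n => ∫ z, ψ n z.1 - ψ n z.2 ∂μ.prod ν) atTop
      (𝓝 (∫ _, 0 ∂μ.prod ν)) := by
    refine tendsto_integral_of_dominated_convergence (fun _ => 2 * C)
      (fun n => ((hψm n).comp measurable_fst).sub ((hψm n).comp measurable_snd)
        |>.aestronglyMeasurable) (integrable_const _)
      (fun n => .of_forall fun z => ?_) (.of_forall fun z => ?_)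
    · rw [Real.norm_eq_abs]
      linarith [abs_sub (ψ n z.1) (ψ n z.2), hψC n z.1, hψC n z.2]
    · have hpow := tendsto_pow_atTop_nhds_zero_of_lt_one
        (by have := sub_nonneg.2 hp1; positivity) hcontr
      refine squeeze_zero_norm (fun n => ?_) ((hpow.mul_const (L * dist z.1 z.2)).trans (by simp))
      rw [Real.norm_eq_abs, ← mul_assoc]
      exact abs_transferOp_iterate_sub_le hf hg hp0 hp1 L.2
        (fun x y => by simpa [Real.dist_eq] using hL.dist_le_mul x y) n z.1 z.2
  simp only [hdiff, integral_zero] at hlim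
  exact sub_eq_zero.1 (tendsto_nhds_unique tendsto_const_nhds hlim)

theorem eq_of_contracting (hf : LipschitzWith Kf f) (hg : LipschitzWith Kg g) (hp0 : 0 ≤ p)
    (hp1 : p ≤ 1) (hcontr : p * Kf + (1 - p) * Kg < 1) {ν : Measure X} [IsProbabilityMeasure μ]
    [IsProbabilityMeasure ν] (hμ : IsStationaryMeasure p f g μ)
    (hν : IsStationaryMeasure p f g ν) : μ = ν := by
  let μ' : ProbabilityMeasure X := ⟨μ, ‹_›⟩
  let ν' : ProbabilityMeasure X := ⟨ν, ‹_›⟩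
  suffices h : Tendsto (fun _ : ℕ => μ') atTop (𝓝 ν') from
    congrArg ProbabilityMeasure.toMeasure (tendsto_nhds_unique tendsto_const_nhds h)
  refine tendsto_iff_forall_lipschitz_integral_tendsto.2 fun φ ⟨C, hC⟩ ⟨L, hL⟩ => ?_
  obtain ⟨x₀⟩ : Nonempty X := nonempty_of_isProbabilityMeasure μ
  have hbdd x : |φ x| ≤ |φ x₀| + C := by
    have := hC x x₀
    rw [Real.dist_eq] at this
    linarith [abs_sub_abs_le_abs_sub (φ x) (φ x₀)]
  change Tendsto (fun _ => ∫ x, φ x ∂μ) atTop (𝓝 (∫ x, φ x ∂ν))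
  rw [integral_eq_of_lipschitz hf hg hp0 hp1 hcontr hμ hν hbdd hL]
  exact tendsto_const_nhds

end IsStationaryMeasure

end StationaryMeasure

section Digits

/-- The `i`-th base-`α` digit of `x` after the point; `digit α 0 x` is `⌊x⌋ mod α`. -/
noncomputable def digit (α i : ℕ) (x : ℝ) : ℕ := (⌊(α : ℝ) ^ i * x⌋ % α).toNat

variable {α : ℕ}

lemma natCast_digit (hα : α ≠ 0) (i : ℕ) (x : ℝ) :
    (digit α i x : ℤ) = ⌊(α : ℝ) ^ i * x⌋ % α :=
  Int.toNat_of_nonneg (Int.emod_nonneg _ (by exact_mod_cast hα))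

lemma digit_lt (hα : α ≠ 0) (i : ℕ) (x : ℝ) : digit α i x < α := by
  have := Int.emod_lt_of_pos ⌊(α : ℝ) ^ i * x⌋ (by omega : (0 : ℤ) < α)
  have := natCast_digit hα i x
  omega

@[fun_prop]
lemma measurable_digit (α i : ℕ) : Measurable (digit α i) :=
  (Measurable.of_discrete (f := fun z : ℤ => (z % α).toNat)).comp
    (Int.measurable_floor.comp (measurable_const.mul measurable_id))

lemma digit_add_natCast {i : ℕ} (hi : i ≠ 0) (x : ℝ) (β : ℕ) :
    digit α i (x + β) = digit α i x := by
  obtain ⟨j, rfl⟩ := Nat.exists_eq_succ_of_ne_zero hi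
  have : (α : ℝ) ^ (j + 1) * (x + β) = (α : ℝ) ^ (j + 1) * x + ((α ^ j * β : ℤ) * α : ℤ) := by
    push_cast; ring
  rw [digit, this, Int.floor_add_intCast, Int.add_mul_emod_self_right, digit]

lemma digit_succ_div (hα : α ≠ 0) (i : ℕ) (x : ℝ) : digit α (i + 1) (x / α) = digit α i x := by
  rw [digit, digit, pow_succ, mul_assoc, mul_div_cancel₀ x (by exact_mod_cast hα)]

lemma floor_pow_succ_mul (hα : α ≠ 0) (n : ℕ) (x : ℝ) :
    ⌊(α : ℝ) ^ (n + 1) * x⌋ = α * ⌊(α : ℝ) ^ n * x⌋ + digit α (n + 1) x := by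
  have : ⌊(α : ℝ) ^ n * x⌋ = ⌊(α : ℝ) ^ (n + 1) * x⌋ / α := by
    rw [← Int.floor_div_natCast, pow_succ, mul_right_comm,
      mul_div_cancel_right₀ _ (by exact_mod_cast hα)]
  rw [this, natCast_digit hα, Int.mul_ediv_add_emod]

lemma floor_pow_mul_eq_of_digit_eq (hα : α ≠ 0) {n : ℕ} {x y : ℝ} (h0 : ⌊y⌋ = ⌊x⌋)
    (hd : ∀ i < n, digit α (i + 1) y = digit α (i + 1) x) :
    ⌊(α : ℝ) ^ n * y⌋ = ⌊(α : ℝ) ^ n * x⌋ := by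
  induction n with
  | zero => simpa using h0
  | succ n ih =>
    rw [floor_pow_succ_mul hα, floor_pow_succ_mul hα, ih fun i hi => hd i (by omega),
      hd n (by omega)]

noncomputable def cylinderCode (α n : ℕ) (x : ℝ) : ℤ × (Fin n → ℕ) :=
  (⌊x⌋, fun i => digit α (i + 1) x)

@[fun_prop]
lemma measurable_cylinderCode (α n : ℕ) : Measurable (cylinderCode α n) :=
  Int.measurable_floor.prodMk (measurable_pi_iff.2 fun i => measurable_digit α (i + 1))

lemma cylinderCode_preimage_subset_ball (hα : α ≠ 0) (n : ℕ) (x : ℝ) :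
    cylinderCode α n ⁻¹' {cylinderCode α n x} ⊆ Metric.ball x ((α : ℝ) ^ n)⁻¹ := by
  intro y hy
  simp only [mem_preimage, mem_singleton_iff, cylinderCode, Prod.mk.injEq, funext_iff] at hy
  have hfloor := floor_pow_mul_eq_of_digit_eq hα hy.1 fun i hi => hy.2 ⟨i, hi⟩
  have hpos : (0 : ℝ) < (α : ℝ) ^ n := by positivity
  have := Int.abs_sub_lt_one_of_floor_eq_floor hfloor
  rw [← mul_sub, abs_mul, abs_of_pos hpos] at this
  rw [Metric.mem_ball, Real.dist_eq, ← one_div]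
  exact (lt_div_iff₀' hpos).2 this

end Digits

section DigitChain

variable {α β : ℕ} {p : ℝ} {μ : Measure ℝ}

theorem IsStationaryMeasure.eq_of_add_div (hα : 2 ≤ α) (hp0 : 0 ≤ p) (hp1 : p < 1)
    {ν : Measure ℝ} [IsProbabilityMeasure μ] [IsProbabilityMeasure ν]
    (hμ : IsStationaryMeasure p (· + (β : ℝ)) (· / (α : ℝ)) μ)
    (hν : IsStationaryMeasure p (· + (β : ℝ)) (· / (α : ℝ)) ν) : μ = ν := by
  have hα' : (2 : ℝ) ≤ α := by exact_mod_cast hα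
  have hf : LipschitzWith 1 (· + (β : ℝ)) := .of_dist_le_mul fun x y => by simp
  have hg : LipschitzWith (α : ℝ≥0)⁻¹ (· / (α : ℝ)) := .of_dist_le_mul fun x y => by
    rw [Real.dist_eq, Real.dist_eq, ← sub_div, abs_div, Nat.abs_cast, NNReal.coe_inv,
      NNReal.coe_natCast, div_eq_inv_mul]
  refine hμ.eq_of_contracting hf hg hp0 hp1.le ?_ hν
  have : (α : ℝ)⁻¹ < 1 := inv_lt_one_of_one_lt₀ (by linarith)
  push_cast
  nlinarith

/-- The translation by `β` does not see the digit, while the division by `α` shifts it to the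
previous one. -/
lemma IsStationaryMeasure.measure_digit_eq [IsFiniteMeasure μ] (hα : α ≠ 0) (hp0 : 0 ≤ p)
    (hp1 : p < 1) (hμ : IsStationaryMeasure p (· + (β : ℝ)) (· / (α : ℝ)) μ) (i j : ℕ) :
    μ {x | digit α i x = j} = μ {x | digit α 0 x = j} := by
  induction i with
  | zero => rfl
  | succ i ih =>
    rw [← ih]
    refine hμ.measure_eq_of_preimage_eq hp0 hp1 (measurable_digit α _ (measurableSet_singleton j))
      ?_ ?_
    · ext x
      simp [digit_add_natCast (Nat.succ_ne_zero i)]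
    · ext x
      simp [digit_succ_div hα]

end DigitChain

lemma liminf_ofReal_div_le_of_le_add {u v : ℕ → ℝ} {c : ℝ} (h : ∀ n, u n ≤ v n + c) :
    liminf (fun n : ℕ => ENNReal.ofReal (u n / n)) atTop
      ≤ liminf (fun n : ℕ => ENNReal.ofReal (v n / n)) atTop := by
  have hc : Tendsto (fun n : ℕ => ENNReal.ofReal (c / n)) atTop (𝓝 0) := by
    simpa using ENNReal.tendsto_ofReal (tendsto_const_div_atTop_nhds_zero_nat c)
  refine (liminf_le_liminf (.of_forall fun n => ?_)).trans_eq
    (ENNReal.liminf_add_of_right_tendsto_zero hc _)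
  calc ENNReal.ofReal (u n / n) ≤ ENNReal.ofReal (v n / n + c / n) := by
        rw [← add_div]
        gcongr
        exact h n
    _ ≤ _ := ENNReal.ofReal_add_le

lemma liminf_ofReal_div_eq_of_abs_sub_le {u v : ℕ → ℝ} {c : ℝ} (h : ∀ n, |u n - v n| ≤ c) :
    liminf (fun n : ℕ => ENNReal.ofReal (u n / n)) atTop
      = liminf (fun n : ℕ => ENNReal.ofReal (v n / n)) atTop :=
  le_antisymm (liminf_ofReal_div_le_of_le_add fun n => by linarith [abs_le.1 (h n)])
    (liminf_ofReal_div_le_of_le_add fun n => by linarith [abs_le.1 (h n)])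

lemma frequently_le_mul_of_liminf_ofReal_div_le {u : ℕ → ℝ} {c ε : ℝ} (hc : 0 ≤ c) (hε : 0 < ε)
    (h : liminf (fun n : ℕ => ENNReal.ofReal (u n / n)) atTop ≤ ENNReal.ofReal c) :
    ∃ᶠ n in atTop, u n ≤ n * (c + ε) := by
  have := frequently_lt_of_liminf_lt (by isBoundedDefault)
    (h.trans_lt ((ENNReal.ofReal_lt_ofReal_iff (by linarith)).2 (lt_add_of_pos_right c hε)))
  refine (this.and_eventually (eventually_gt_atTop 0)).mono fun n ⟨hn, hn0⟩ => ?_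
  rw [ENNReal.ofReal_lt_ofReal_iff (by positivity), div_lt_iff₀ (by positivity)] at hn
  linarith

section Entropy

noncomputable def digitProb (α : ℕ) (μ : Measure ℝ) (j : ℕ) : ℝ := μ.real {x | digit α 0 x = j}

noncomputable def digitEntropy (α : ℕ) (μ : Measure ℝ) : ℝ :=
  ∑ j ∈ Finset.range α, Real.negMulLog (digitProb α μ j)

noncomputable def digitInfo (α : ℕ) (μ : Measure ℝ) (n : ℕ) (x : ℝ) : ℝ :=
  ∑ i ∈ Finset.range n, -Real.log (digitProb α μ (digit α (i + 1) x))

noncomputable def lowerDigitInfoRate (α : ℕ) (μ : Measure ℝ) (x : ℝ) : ℝ≥0∞ :=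
  liminf (fun n : ℕ => ENNReal.ofReal (digitInfo α μ n x / n)) atTop

variable {α : ℕ} {μ : Measure ℝ}

lemma neg_log_digitProb_nonneg [IsProbabilityMeasure μ] (j : ℕ) : 0 ≤ -Real.log (digitProb α μ j) :=
  neg_nonneg.2 (Real.log_nonpos measureReal_nonneg measureReal_le_one)

lemma neg_log_digitProb_le_sum [IsProbabilityMeasure μ] {j : ℕ} (hj : j < α) :
    -Real.log (digitProb α μ j) ≤ ∑ k ∈ Finset.range α, -Real.log (digitProb α μ k) :=
  Finset.single_le_sum (fun k _ => neg_log_digitProb_nonneg k) (Finset.mem_range.2 hj)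

lemma digitInfo_nonneg [IsProbabilityMeasure μ] (n : ℕ) (x : ℝ) : 0 ≤ digitInfo α μ n x :=
  Finset.sum_nonneg fun _ _ => neg_log_digitProb_nonneg _

@[fun_prop]
lemma measurable_digitInfo (n : ℕ) : Measurable (digitInfo α μ n) :=
  Finset.measurable_sum _ fun _ _ =>
    (Measurable.of_discrete (f := fun j => -Real.log (digitProb α μ j))).comp (measurable_digit α _)

@[fun_prop]
lemma measurable_lowerDigitInfoRate : Measurable (lowerDigitInfoRate α μ) :=
  .liminf fun n => ENNReal.measurable_ofReal.comp ((measurable_digitInfo n).div_const _)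

lemma lowerDigitInfoRate_add_natCast (x : ℝ) (β : ℕ) :
    lowerDigitInfoRate α μ (x + β) = lowerDigitInfoRate α μ x := by
  simp only [lowerDigitInfoRate, digitInfo, digit_add_natCast (Nat.succ_ne_zero _)]

lemma lowerDigitInfoRate_div [IsProbabilityMeasure μ] (hα : α ≠ 0) (x : ℝ) :
    lowerDigitInfoRate α μ (x / α) = lowerDigitInfoRate α μ x := by
  refine liminf_ofReal_div_eq_of_abs_sub_le
    (c := ∑ k ∈ Finset.range α, -Real.log (digitProb α μ k)) fun n => ?_
  cases n with
  | zero => simpa [digitInfo] using Finset.sum_nonneg fun k _ => neg_log_digitProb_nonneg k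
  | succ n =>
    simp only [digitInfo, digit_succ_div hα]
    rw [Finset.sum_range_succ' (fun i => -Real.log (digitProb α μ (digit α i x))),
      Finset.sum_range_succ]
    have h0 := neg_log_digitProb_le_sum (μ := μ) (digit_lt hα 0 x)
    have h1 := neg_log_digitProb_le_sum (μ := μ) (digit_lt hα (n + 1) x)
    have := neg_log_digitProb_nonneg (α := α) (μ := μ) (digit α 0 x)
    have := neg_log_digitProb_nonneg (α := α) (μ := μ) (digit α (n + 1) x)
    rw [abs_le]
    constructor <;> linarith

end Entropy

section EntropyRate

variable {α β : ℕ} {p : ℝ} {μ : Measure ℝ}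

lemma lintegral_comp_digit (hα : α ≠ 0) (G : ℕ → ℝ≥0∞) (i : ℕ) :
    ∫⁻ x, G (digit α i x) ∂μ = ∑ j ∈ Finset.range α, G j * μ {x | digit α i x = j} := by
  have hmap j : μ.map (digit α i) {j} = μ {x | digit α i x = j} :=
    Measure.map_apply (measurable_digit α i) (measurableSet_singleton j)
  rw [← lintegral_map (f := G) Measurable.of_discrete (measurable_digit α i), lintegral_countable',
    tsum_eq_sum (s := Finset.range α) fun j hj => ?_]
  · simp only [hmap]
  · have : {x | digit α i x = j} = ∅ :=
      eq_empty_of_forall_notMem fun x hx => hj (Finset.mem_range.2 (hx ▸ digit_lt hα i x))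
    rw [hmap, this, measure_empty, mul_zero]

lemma IsStationaryMeasure.lintegral_neg_log_digitProb [IsProbabilityMeasure μ] (hα : α ≠ 0)
    (hp0 : 0 ≤ p) (hp1 : p < 1) (hμ : IsStationaryMeasure p (· + (β : ℝ)) (· / (α : ℝ)) μ)
    (i : ℕ) :
    ∫⁻ x, ENNReal.ofReal (-Real.log (digitProb α μ (digit α i x))) ∂μ
      = ENNReal.ofReal (digitEntropy α μ) := by
  rw [lintegral_comp_digit hα (fun j => ENNReal.ofReal (-Real.log (digitProb α μ j))),
    digitEntropy, ENNReal.ofReal_sum_of_nonneg (f := fun j => Real.negMulLog (digitProb α μ j))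
      fun j _ => Real.negMulLog_nonneg measureReal_nonneg measureReal_le_one]
  refine Finset.sum_congr rfl fun j _ => ?_
  rw [hμ.measure_digit_eq hα hp0 hp1, ← ofReal_measureReal, ← ENNReal.ofReal_mul
    (neg_log_digitProb_nonneg j), Real.negMulLog, digitProb]
  congr 1
  ring

lemma IsStationaryMeasure.lintegral_digitInfo_div [IsProbabilityMeasure μ] (hα : α ≠ 0)
    (hp0 : 0 ≤ p) (hp1 : p < 1) (hμ : IsStationaryMeasure p (· + (β : ℝ)) (· / (α : ℝ)) μ)
    {n : ℕ} (hn : n ≠ 0) :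
    ∫⁻ x, ENNReal.ofReal (digitInfo α μ n x / n) ∂μ = ENNReal.ofReal (digitEntropy α μ) := by
  have hterm x : ENNReal.ofReal (digitInfo α μ n x / n)
      = (∑ i ∈ Finset.range n, ENNReal.ofReal (-Real.log (digitProb α μ (digit α (i + 1) x))))
        / n := by
    rw [ENNReal.ofReal_div_of_pos (by positivity), ENNReal.ofReal_natCast, digitInfo,
      ENNReal.ofReal_sum_of_nonneg fun i _ => neg_log_digitProb_nonneg _]
  simp_rw [hterm, div_eq_mul_inv]
  rw [lintegral_mul_const' _ _ (by simpa using hn), lintegral_finsetSum _ fun i _ => by fun_prop]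
  simp only [hμ.lintegral_neg_log_digitProb hα hp0 hp1, Finset.sum_const, Finset.card_range,
    nsmul_eq_mul]
  rw [mul_comm, ← mul_assoc, ENNReal.inv_mul_cancel (by simpa using hn) (ENNReal.natCast_ne_top n),
    one_mul]

/-- By Fatou the integral of the rate is at most the entropy; its superlevel sets are invariant,
hence of measure `0` or `1` since the stationary measure is unique. -/
lemma IsStationaryMeasure.ae_lowerDigitInfoRate_le [IsProbabilityMeasure μ] (hα : 2 ≤ α)
    (hp0 : 0 ≤ p) (hp1 : p < 1) (hμ : IsStationaryMeasure p (· + (β : ℝ)) (· / (α : ℝ)) μ) :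
    ∀ᵐ x ∂μ, lowerDigitInfoRate α μ x ≤ ENNReal.ofReal (digitEntropy α μ) := by
  have hα0 : α ≠ 0 := by omega
  set H := ENNReal.ofReal (digitEntropy α μ)
  have hfatou : ∫⁻ x, lowerDigitInfoRate α μ x ∂μ ≤ H := by
    refine (lintegral_liminf_le fun n => by fun_prop).trans_eq ?_
    rw [liminf_congr ((eventually_ne_atTop 0).mono fun n hn =>
      hμ.lintegral_digitInfo_div hα0 hp0 hp1 hn), liminf_const]
  have hlevel c (hc : H < c) : ∀ᵐ x ∂μ, lowerDigitInfoRate α μ x < c := by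
    have hB : MeasurableSet {x | c ≤ lowerDigitInfoRate α μ x} :=
      measurableSet_le measurable_const measurable_lowerDigitInfoRate
    rcases hμ.measure_eq_zero_or_one (fun ν _ hν => hν.eq_of_add_div hα hp0 hp1 hμ) hB
      (by ext x; simp [lowerDigitInfoRate_add_natCast])
      (by ext x; simp [lowerDigitInfoRate_div hα0]) with h0 | h1
    · exact (measure_eq_zero_iff_ae_notMem.1 h0).mono fun x hx => not_le.1 hx
    · have := mul_meas_ge_le_lintegral (measurable_lowerDigitInfoRate (α := α) (μ := μ)) (μ := μ) c
      rw [h1, mul_one] at this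
      exact absurd (this.trans hfatou) (not_le.2 hc)
  have hall : ∀ᵐ x ∂μ, ∀ m : ℕ, lowerDigitInfoRate α μ x < H + (m : ℝ≥0∞)⁻¹ :=
    ae_all_iff.2 fun m => hlevel _ (ENNReal.lt_add_right ENNReal.ofReal_ne_top (by simp))
  filter_upwards [hall] with x hx
  have hlim : Tendsto (fun m : ℕ => H + (m : ℝ≥0∞)⁻¹) atTop (𝓝 H) := by
    simpa using tendsto_const_nhds.add ENNReal.tendsto_inv_nat_nhds_zero
  exact ge_of_tendsto' hlim fun m => (hx m).le

end EntropyRate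

section FiberBorelCantelli

variable {X : Type*} [MeasurableSpace X]

lemma ae_measure_fiber_pos {S : Type*} [Countable S] (μ : Measure X) (c : X → S) :
    ∀ᵐ x ∂μ, 0 < μ (c ⁻¹' {c x}) := by
  have : μ (c ⁻¹' {s | μ (c ⁻¹' {s}) = 0}) = 0 :=
    (measure_preimage_eq_zero_iff_of_countable (to_countable _)).2 fun _ hs => hs
  exact (measure_eq_zero_iff_ae_notMem.1 this).mono fun _ hx => pos_iff_ne_zero.2 hx

variable {S : Type*} [MeasurableSpace S] [MeasurableSingletonClass S] [Countable S]

lemma measure_setOf_measure_fiber_lt_le (μ : Measure X) {c : X → S} (hc : Measurable c)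
    (q : Measure S) [IsProbabilityMeasure q] (r : ℝ≥0∞) :
    μ {x | μ (c ⁻¹' {c x}) < r * q {c x}} ≤ r := by
  set T := {s | μ (c ⁻¹' {s}) < r * q {s}}
  calc μ (c ⁻¹' T)
      = ∑' s : T, μ (c ⁻¹' {(s : S)}) :=
        (tsum_measure_preimage_singleton T.to_countable fun s _ =>
          hc (measurableSet_singleton s)).symm
    _ ≤ ∑' s : T, r * q {(s : S)} := ENNReal.tsum_le_tsum fun s => s.2.le
    _ = r * q T := by
      rw [ENNReal.tsum_mul_left]
      exact congrArg (r * ·) (tsum_measure_preimage_singleton (f := id) T.to_countable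
        fun s _ => measurableSet_singleton s)
    _ ≤ r := mul_le_of_le_one_right' prob_le_one

lemma ae_eventually_pow_mul_le_measure_fiber {S : ℕ → Type*} [∀ n, MeasurableSpace (S n)]
    [∀ n, MeasurableSingletonClass (S n)] [∀ n, Countable (S n)] (μ : Measure X)
    {c : ∀ n, X → S n} (hc : ∀ n, Measurable (c n)) (q : ∀ n, Measure (S n))
    [∀ n, IsProbabilityMeasure (q n)] {r : ℝ≥0∞} (hr : r < 1) :
    ∀ᵐ x ∂μ, ∀ᶠ n in atTop, r ^ n * q n {c n x} ≤ μ (c n ⁻¹' {c n x}) := by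
  have hsum : ∑' n, μ {x | μ (c n ⁻¹' {c n x}) < r ^ n * q n {c n x}} ≠ ∞ := by
    refine ne_top_of_le_ne_top ?_
      (ENNReal.tsum_le_tsum fun n => measure_setOf_measure_fiber_lt_le μ (hc n) (q n) (r ^ n))
    rw [ENNReal.tsum_geometric]
    exact ENNReal.inv_ne_top.2 (tsub_pos_of_lt hr).ne'
  filter_upwards [ae_eventually_notMem hsum] with x hx
  exact hx.mono fun n hn => not_lt.1 hn

end FiberBorelCantelli

section CylinderCodeLaw

variable {α : ℕ} {μ : Measure ℝ}

noncomputable def cylinderCodeLaw (α : ℕ) (μ : Measure ℝ) (n : ℕ) : Measure (ℤ × (Fin n → ℕ)) :=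
  (μ.map Int.floor).prod (Measure.pi fun _ => μ.map (digit α 0))

instance [IsProbabilityMeasure μ] (n : ℕ) : IsProbabilityMeasure (cylinderCodeLaw α μ n) := by
  have := Measure.isProbabilityMeasure_map (μ := μ) Int.measurable_floor.aemeasurable
  have := Measure.isProbabilityMeasure_map (μ := μ) (measurable_digit α 0).aemeasurable
  unfold cylinderCodeLaw
  infer_instance

lemma cylinderCodeLaw_singleton [IsFiniteMeasure μ] (n : ℕ) (x : ℝ) :
    cylinderCodeLaw α μ n {cylinderCode α n x}
      = μ {y | ⌊y⌋ = ⌊x⌋} * ∏ i : Fin n, μ {y | digit α 0 y = digit α (i + 1) x} := by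
  rw [cylinderCodeLaw, cylinderCode, ← singleton_prod_singleton, Measure.prod_prod,
    ← univ_pi_singleton, Measure.pi_pi, Measure.map_apply Int.measurable_floor
      (measurableSet_singleton _)]
  simp only [Measure.map_apply (measurable_digit α 0) (measurableSet_singleton _)]
  rfl

end CylinderCodeLaw

section LocalDimension

variable {μ : Measure ℝ} {x : ℝ}

lemma lowerLocalDim_nonneg [IsProbabilityMeasure μ] (x : ℝ) : 0 ≤ lowerLocalDim μ x := by
  rw [lowerLocalDim, liminf_eq]
  by_cases hbdd : BddAbove {a : ℝ | ∀ᶠ r in 𝓝[>] 0,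
      a ≤ Real.log (μ (Metric.ball x r)).toReal / Real.log r}
  · refine le_csSup hbdd ?_
    filter_upwards [Ioo_mem_nhdsGT zero_lt_one] with r hr
    exact div_nonneg_of_nonpos (Real.log_nonpos ENNReal.toReal_nonneg measureReal_le_one)
      (Real.log_nonpos hr.1.le hr.2.le)
  · rw [Real.sSup_of_not_bddAbove hbdd]

lemma lowerLocalDim_le_of_frequently {r : ℕ → ℝ} (hr : Tendsto r atTop (𝓝[>] 0)) {c : ℝ}
    (hc : 0 ≤ c)
    (h : ∃ᶠ n in atTop, Real.log (μ (Metric.ball x (r n))).toReal / Real.log (r n) ≤ c) :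
    lowerLocalDim μ x ≤ c := by
  rw [lowerLocalDim, liminf_eq]
  refine Real.sSup_le (fun a ha => ?_) hc
  obtain ⟨n, hn, ha⟩ := (h.and_eventually (hr.eventually ha)).exists
  exact ha.trans hn

lemma lowerLocalDim_le_of_frequently_exp_le {a v t : ℝ} (ha : 1 < a) (hv : 0 < v) (ht : 0 ≤ t)
    (h : ∃ᶠ n : ℕ in atTop, v * Real.exp (-(n * t)) ≤ μ.real (Metric.ball x (a ^ n)⁻¹)) :
    lowerLocalDim μ x ≤ t / Real.log a := by
  have hloga := Real.log_pos ha
  have hr : Tendsto (fun n : ℕ => (a ^ n)⁻¹) atTop (𝓝[>] 0) :=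
    tendsto_nhdsWithin_iff.2 ⟨(tendsto_pow_atTop_atTop_of_one_lt ha).inv_tendsto_atTop,
      .of_forall fun n => inv_pos.2 (pow_pos (zero_lt_one.trans ha) n)⟩
  refine le_of_forall_pos_le_add fun δ hδ =>
    lowerLocalDim_le_of_frequently hr (add_nonneg (div_nonneg ht hloga.le) hδ.le) ?_
  obtain ⟨N, hN⟩ := exists_nat_gt (-Real.log v / (δ * Real.log a))
  refine (h.and_eventually (eventually_gt_atTop N)).mono fun n ⟨hn, hNn⟩ => ?_
  have hNn : (N : ℝ) < n := by exact_mod_cast hNn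
  have hlog : Real.log v - n * t ≤ Real.log (μ (Metric.ball x (a ^ n)⁻¹)).toReal := by
    have := Real.log_le_log (by positivity) hn
    rwa [Real.log_mul hv.ne' (Real.exp_pos _).ne', Real.log_exp, ← sub_eq_add_neg] at this
  have hv' : -Real.log v ≤ δ * Real.log a * n := by
    rw [div_lt_iff₀ (by positivity)] at hN
    nlinarith [mul_le_mul_of_nonneg_right hNn.le (by positivity : 0 ≤ δ * Real.log a)]
  rw [Real.log_inv, Real.log_pow, div_le_iff_of_neg (by nlinarith)]
  calc (t / Real.log a + δ) * -(n * Real.log a) = -(n * t) - δ * Real.log a * n := by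
        field_simp
        ring
    _ ≤ _ := by linarith

end LocalDimension

section DimensionBound

variable {α β : ℕ} {p : ℝ} {μ : Measure ℝ}

lemma prod_digitProb_eq_exp_neg_digitInfo {n : ℕ} {x : ℝ}
    (h : ∀ i, 0 < digitProb α μ (digit α (i + 1) x)) :
    ∏ i ∈ Finset.range n, digitProb α μ (digit α (i + 1) x) = Real.exp (-digitInfo α μ n x) := by
  simp only [digitInfo, Finset.sum_neg_distrib, neg_neg, Real.exp_sum, Real.exp_log (h _)]

lemma lowerLocalDim_le_of_frequently_digitInfo_le [IsFiniteMeasure μ] (hα : 2 ≤ α) {x t ε : ℝ}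
    (ht : 0 ≤ t) (hε : 0 < ε) (hfloor : 0 < μ {y | ⌊y⌋ = ⌊x⌋})
    (hdigit : ∀ i, 0 < digitProb α μ (digit α (i + 1) x))
    (hfreq : ∃ᶠ n in atTop, digitInfo α μ n x ≤ n * (t + ε))
    (hcyl : ∀ᶠ n in atTop, ENNReal.ofReal (Real.exp (-ε)) ^ n
      * cylinderCodeLaw α μ n {cylinderCode α n x}
        ≤ μ (cylinderCode α n ⁻¹' {cylinderCode α n x})) :
    lowerLocalDim μ x ≤ (t + 2 * ε) / Real.log α := by
  set u := μ.real {y | ⌊y⌋ = ⌊x⌋}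
  have hu : 0 < u := ENNReal.toReal_pos hfloor.ne' (measure_ne_top _ _)
  refine lowerLocalDim_le_of_frequently_exp_le (by exact_mod_cast hα) hu (by positivity)
    ((hfreq.and_eventually hcyl).mono fun n ⟨hinfo, hn⟩ => ?_)
  have hlaw : (ENNReal.ofReal (Real.exp (-ε)) ^ n
      * cylinderCodeLaw α μ n {cylinderCode α n x}).toReal
        = Real.exp (-(n * ε)) * (u * Real.exp (-digitInfo α μ n x)) := by
    rw [cylinderCodeLaw_singleton, ENNReal.toReal_mul, ENNReal.toReal_pow,
      ENNReal.toReal_ofReal (Real.exp_pos _).le, ← Real.exp_nat_mul, ENNReal.toReal_mul,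
      ENNReal.toReal_prod, mul_neg]
    rw [show ∏ i : Fin n, (μ {y | digit α 0 y = digit α (i + 1) x}).toReal
        = ∏ i ∈ Finset.range n, digitProb α μ (digit α (i + 1) x) from
      Fin.prod_univ_eq_prod_range (fun i => digitProb α μ (digit α (i + 1) x)) n,
      prod_digitProb_eq_exp_neg_digitInfo hdigit]
    rfl
  calc u * Real.exp (-(n * (t + 2 * ε)))
      ≤ Real.exp (-(n * ε)) * (u * Real.exp (-digitInfo α μ n x)) := by
        rw [mul_left_comm, ← Real.exp_add]
        gcongr
        linarith
    _ ≤ μ.real (cylinderCode α n ⁻¹' {cylinderCode α n x}) :=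
        hlaw ▸ ENNReal.toReal_mono (measure_ne_top _ _) hn
    _ ≤ μ.real (Metric.ball x ((α : ℝ) ^ n)⁻¹) :=
        measureReal_mono (cylinderCode_preimage_subset_ball (by omega) n x)

theorem IsStationaryMeasure.ae_lowerLocalDim_le [IsProbabilityMeasure μ] (hα : 2 ≤ α)
    (hp0 : 0 ≤ p) (hp1 : p < 1) (hμ : IsStationaryMeasure p (· + (β : ℝ)) (· / (α : ℝ)) μ) :
    ∀ᵐ x ∂μ, lowerLocalDim μ x ≤ digitEntropy α μ / Real.log α := by
  have hα0 : α ≠ 0 := by omega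
  set H := digitEntropy α μ
  have hH : 0 ≤ H := Finset.sum_nonneg fun j _ =>
    Real.negMulLog_nonneg measureReal_nonneg measureReal_le_one
  have hcyl : ∀ᵐ x ∂μ, ∀ m : ℕ, ∀ᶠ n in atTop,
      ENNReal.ofReal (Real.exp (-(1 / (m + 1 : ℝ)))) ^ n
        * cylinderCodeLaw α μ n {cylinderCode α n x}
        ≤ μ (cylinderCode α n ⁻¹' {cylinderCode α n x}) :=
    ae_all_iff.2 fun m => ae_eventually_pow_mul_le_measure_fiber μ (measurable_cylinderCode α)
      (cylinderCodeLaw α μ) (ENNReal.ofReal_lt_one.2 (Real.exp_lt_one_iff.2 (by simp; positivity)))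
  have hdigit : ∀ᵐ x ∂μ, ∀ i, 0 < digitProb α μ (digit α i x) :=
    ae_all_iff.2 fun i => (ae_measure_fiber_pos μ (digit α i)).mono fun x hx =>
      ENNReal.toReal_pos (by rwa [← hμ.measure_digit_eq hα0 hp0 hp1 i, ← pos_iff_ne_zero])
        (measure_ne_top _ _)
  filter_upwards [hμ.ae_lowerDigitInfoRate_le hα hp0 hp1, hcyl, ae_measure_fiber_pos μ Int.floor,
    hdigit] with x hrate hcyl hfloor hdigit
  have hbound (m : ℕ) : lowerLocalDim μ x ≤ (H + 2 * (1 / (m + 1 : ℝ))) / Real.log α :=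
    lowerLocalDim_le_of_frequently_digitInfo_le hα hH (by positivity) hfloor (fun i => hdigit _)
      (frequently_le_mul_of_liminf_ofReal_div_le hH (by positivity) hrate) (hcyl m)
  have hlim : Tendsto (fun m : ℕ => (H + 2 * (1 / (m + 1 : ℝ))) / Real.log α) atTop
      (𝓝 (H / Real.log α)) := by
    simpa using ((tendsto_one_div_add_atTop_nhds_zero_nat.const_mul 2).const_add H).div_const
      (Real.log α)
  exact ge_of_tendsto' hlim hbound

end DimensionBound

lemma xi_eq_digitProb {α k : ℕ} (hk : k < α) {μ : Measure ℝ} (hneg : μ (Iio 0) = 0) :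
    xi α μ k = digitProb α μ k := by
  have hα : (0 : ℤ) < α := by omega
  set g : ℕ → ℤ := fun m => m * α + k
  have hg : Function.Injective g := fun m m' h => by
    simpa [g, hα.ne', Nat.pos_iff_ne_zero.1 (by omega : 0 < α)] using h
  have hIco (m : ℕ) : Ico ((m : ℝ) * α + k) ((m : ℝ) * α + k + 1) = Int.floor ⁻¹' {g m} := by
    rw [Int.preimage_floor_singleton]
    push_cast [g]
    rfl
  have hdigit x : digit α 0 x = (⌊x⌋ % α).toNat := by simp [digit]
  have hsub : Int.floor ⁻¹' range g ⊆ {x : ℝ | digit α 0 x = k} := by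
    rintro x ⟨m, hm⟩
    rw [mem_ofPred_eq, hdigit, ← hm, show g m = k + m * α from Int.add_comm _ _,
      Int.add_mul_emod_self_right, Int.emod_eq_of_lt (by omega) (by omega), Int.toNat_natCast]
  have hdiff : {x : ℝ | digit α 0 x = k} \ Int.floor ⁻¹' range g ⊆ Iio 0 := by
    rintro x ⟨hx, hxg⟩
    by_contra hx0
    have hz : 0 ≤ ⌊x⌋ := Int.floor_nonneg.2 (not_lt.1 hx0)
    have hmod : ⌊x⌋ % α = k := by
      rw [mem_ofPred_eq, hdigit] at hx
      rw [← hx, Int.toNat_of_nonneg (Int.emod_nonneg _ hα.ne')]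
    refine hxg ⟨(⌊x⌋ / α).toNat, ?_⟩
    simp only [g, Int.toNat_of_nonneg (Int.ediv_nonneg hz hα.le), ← hmod, Int.ediv_mul_add_emod]
  rw [xi, digitProb, measureReal_def,
    ← measure_eq_measure_of_null_sdiff hsub (measure_mono_null hdiff hneg)]
  simp_rw [hIco]
  rw [← measure_iUnion (fun m m' hmm' => (disjoint_singleton.2 (hg.ne hmm')).preimage _)
    fun m => Int.measurable_floor (measurableSet_singleton _), ← preimage_iUnion,
    iUnion_singleton_eq_range]

theorem stmt11_general (α β : ℕ) (hα : 2 ≤ α) (p : ℝ) (hp0 : 0 < p) (hp1 : p < 1)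
    (π : Measure ℝ) [IsProbabilityMeasure π] (hsupp : π (Ici (0 : ℝ)) = 1)
    (hinv : ∀ A : Set ℝ, MeasurableSet A →
      π A = ENNReal.ofReal p * π ((fun y => y + (β : ℝ)) ⁻¹' A)
          + ENNReal.ofReal (1 - p) * π ((fun y => y / (α : ℝ)) ⁻¹' A)) :
    sInf {s : ℝ | ∀ᵐ x ∂π, lowerLocalDim π x ≤ s} ≤
      (∑ i ∈ Finset.range α, xi α π i * Real.log (xi α π i)) / Real.log ((α : ℝ)⁻¹) := by
  have hneg : π (Iio 0) = 0 := by rwa [← compl_Ici, prob_compl_eq_zero_iff measurableSet_Ici]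
  have hrhs : (∑ i ∈ Finset.range α, xi α π i * Real.log (xi α π i)) / Real.log ((α : ℝ)⁻¹)
      = digitEntropy α π / Real.log α := by
    rw [Real.log_inv, div_neg, ← neg_div, ← Finset.sum_neg_distrib, digitEntropy]
    refine congrArg (· / _) (Finset.sum_congr rfl fun k hk => ?_)
    rw [xi_eq_digitProb (Finset.mem_range.1 hk) hneg, Real.negMulLog, neg_mul]
  rw [hrhs]
  refine csInf_le ⟨0, fun s hs => ?_⟩ (IsStationaryMeasure.ae_lowerLocalDim_le hα hp0.le hp1 hinv)
  obtain ⟨x, hx⟩ := (show ∀ᵐ x ∂π, lowerLocalDim π x ≤ s from hs).exists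
  exact (lowerLocalDim_nonneg x).trans hx

/-- First part of the main theorem:
`dim_H^* π ≤ (Σ_{i=0}^{α-1} ξ_i·log ξ_i)/log(α⁻¹)` (with `0·log 0 = 0`, which is
automatic since `Real.log 0 = 0`). -/
theorem stmt11 (α β : ℕ) (hα : 2 ≤ α) (hβ : 1 ≤ β) (p : ℝ) (hp0 : 0 < p) (hp1 : p < 1)
    (π : Measure ℝ) [IsProbabilityMeasure π] (hsupp : π (Ici (0 : ℝ)) = 1)
    (hinv : ∀ A : Set ℝ, MeasurableSet A →
      π A = ENNReal.ofReal p * π ((fun y => y + (β : ℝ)) ⁻¹' A)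
          + ENNReal.ofReal (1 - p) * π ((fun y => y / (α : ℝ)) ⁻¹' A)) :
    sInf {s : ℝ | ∀ᵐ x ∂π, lowerLocalDim π x ≤ s} ≤
      (∑ i ∈ Finset.range α, xi α π i * Real.log (xi α π i)) / Real.log ((α : ℝ)⁻¹) :=
  stmt11_general α β hα p hp0 hp1 π hsupp hinv
end
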